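/- arXiv:2604.19044 — 9 statements merged into one kernel-verified Lean document; each statement's English description precedes it below -/
import Mathlib

section
/- Let F and G be Borel probability measures on the rectangle R = [a1,b1] × [a2,b2] ⊂ ℝ² that have the same marginal distributions (the pushforwards of F and G under each coordinate projection coincide). Then the following are equivalent: (i) F dominates G in the supermodular order, i.e. ∫ h dF ≥ ∫ h dG for every bounded measurable supermodular h : R → ℝ; (ii) for every (x,y) ∈ R, F({(s,t) ∈ R : s ≤ x, t ≤ y}) ≥ G({(s,t) ∈ R : s ≤ x, t ≤ y}). -/
/-!
Write `c p` for the increment of `h` over the box `[p.1, b₁] × [p.2, b₂]`; then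
`h (x, y) = c (x, y) + h (x, b₂) + h (b₁, y) - h (b₁, b₂)`, and the last three terms have the same
integral under `F` and `G` because the marginals agree. For supermodular `h` the function `c` has
nonnegative box increments, like a distribution function of a measure. Rounding the corner of
the box up to finite grids `tᵢ`, `sⱼ` turns `c` into `∑ Δᵢⱼ 1{p ≤ (tᵢ, sⱼ)}` with `Δᵢⱼ ≥ 0`, whose
integrals are ordered by CDF domination. The edge functions `c (·, a₂)` and `c (a₁, ·)` are
monotone, so they jump at countably many points only; putting these points into the grids makes
the rounded functions converge to `c` on the whole rectangle, and dominated convergence passes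
the inequality to the limit. Conversely, indicators of lower orthants are supermodular, and their
integrals are the CDF values.
-/

open MeasureTheory Filter Set Topology

def boxIncr (h : ℝ × ℝ → ℝ) (x₁ x₂ y₁ y₂ : ℝ) : ℝ :=
  h (x₂, y₂) - h (x₂, y₁) - h (x₁, y₂) + h (x₁, y₁)

def TwoIncreasingOn (h : ℝ × ℝ → ℝ) (s t : Set ℝ) : Prop :=
  ∀ ⦃x₁⦄, x₁ ∈ s → ∀ ⦃x₂⦄, x₂ ∈ s → x₁ ≤ x₂ → ∀ ⦃y₁⦄, y₁ ∈ t → ∀ ⦃y₂⦄, y₂ ∈ t → y₁ ≤ y₂ →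
    0 ≤ boxIncr h x₁ x₂ y₁ y₂

section BoxIncr

lemma sum_Ico_sum_Ico_boxIncr (h : ℝ × ℝ → ℝ) (t s : ℕ → ℝ) {m n m' n' : ℕ} (hmn : m ≤ n)
    (hmn' : m' ≤ n') :
    ∑ i ∈ Finset.Ico m n, ∑ j ∈ Finset.Ico m' n', boxIncr h (t i) (t (i + 1)) (s j) (s (j + 1)) =
      boxIncr h (t m) (t n) (s m') (s n') := by
  have inner : ∀ x₁ x₂, ∑ j ∈ Finset.Ico m' n', boxIncr h x₁ x₂ (s j) (s (j + 1)) =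
      boxIncr h x₁ x₂ (s m') (s n') := by
    intro x₁ x₂
    convert Finset.sum_Ico_sub (fun j => h (x₂, s j) - h (x₁, s j)) hmn' using 1
    · simp only [boxIncr]; congr! 1; ring
    · simp only [boxIncr]; ring
  simp only [inner]
  convert Finset.sum_Ico_sub (fun i => h (t i, s n') - h (t i, s m')) hmn using 1
  · simp only [boxIncr]; congr! 1; ring
  · simp only [boxIncr]; ring

variable {h : ℝ × ℝ → ℝ}

lemma abs_boxIncr_le {C : ℝ} (hC : ∀ p, |h p| ≤ C) (x₁ x₂ y₁ y₂ : ℝ) :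
    |boxIncr h x₁ x₂ y₁ y₂| ≤ 4 * C := by
  have := abs_le.1 (hC (x₁, y₁)); have := abs_le.1 (hC (x₁, y₂))
  have := abs_le.1 (hC (x₂, y₁)); have := abs_le.1 (hC (x₂, y₂))
  rw [boxIncr, abs_le]
  constructor <;> linarith

lemma twoIncreasingOn_of_supermodularOn {s t : Set ℝ}
    (hsm : ∀ p ∈ s ×ˢ t, ∀ q ∈ s ×ˢ t, h p + h q ≤ h (p ⊔ q) + h (p ⊓ q)) :
    TwoIncreasingOn h s t := by
  intro x₁ hx₁ x₂ hx₂ hx y₁ hy₁ y₂ hy₂ hy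
  have := hsm (x₁, y₂) ⟨hx₁, hy₂⟩ (x₂, y₁) ⟨hx₂, hy₁⟩
  rw [Prod.mk_sup_mk, Prod.mk_inf_mk, sup_of_le_right hx, sup_of_le_left hy,
    inf_of_le_left hx, inf_of_le_right hy] at this
  rw [boxIncr]
  linarith

variable {a₁ b₁ a₂ b₂ : ℝ}

namespace TwoIncreasingOn

lemma antitoneOn_boxIncr_fst (hh : TwoIncreasingOn h (Icc a₁ b₁) (Icc a₂ b₂)) (hab₂ : a₂ ≤ b₂) :
    AntitoneOn (fun x => boxIncr h x b₁ a₂ b₂) (Icc a₁ b₁) := by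
  intro x hx x' hx' hxx'
  have := hh hx hx' hxx' (left_mem_Icc.2 hab₂) (right_mem_Icc.2 hab₂) hab₂
  simp only [boxIncr] at this ⊢
  linarith

lemma antitoneOn_boxIncr_snd (hh : TwoIncreasingOn h (Icc a₁ b₁) (Icc a₂ b₂)) (hab₁ : a₁ ≤ b₁) :
    AntitoneOn (fun y => boxIncr h a₁ b₁ y b₂) (Icc a₂ b₂) := by
  intro y hy y' hy' hyy'
  have := hh (left_mem_Icc.2 hab₁) (right_mem_Icc.2 hab₁) hab₁ hy hy' hyy'
  simp only [boxIncr] at this ⊢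
  linarith

/-- The difference is the increment over the L-shaped region
`[x, b₁] × [y, b₂] \ [x', b₁] × [y', b₂]`, which is covered by the two strips on the right. -/
lemma abs_boxIncr_sub_le (hh : TwoIncreasingOn h (Icc a₁ b₁) (Icc a₂ b₂)) {x x' y y' : ℝ}
    (hx : x ∈ Icc a₁ b₁) (hx' : x' ∈ Icc a₁ b₁) (hxx' : x ≤ x')
    (hy : y ∈ Icc a₂ b₂) (hy' : y' ∈ Icc a₂ b₂) (hyy' : y ≤ y') :
    |boxIncr h x b₁ y b₂ - boxIncr h x' b₁ y' b₂| ≤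
      boxIncr h x x' a₂ b₂ + boxIncr h a₁ b₁ y y' := by
  have ha₁ : a₁ ∈ Icc a₁ b₁ := left_mem_Icc.2 (hx.1.trans hx.2)
  have hb₁ : b₁ ∈ Icc a₁ b₁ := right_mem_Icc.2 (hx.1.trans hx.2)
  have ha₂ : a₂ ∈ Icc a₂ b₂ := left_mem_Icc.2 (hy.1.trans hy.2)
  have hb₂ : b₂ ∈ Icc a₂ b₂ := right_mem_Icc.2 (hy.1.trans hy.2)
  have h₁ := hh hx hx' hxx' ha₂ hy hy.1
  have h₂ := hh hx hx' hxx' hy hb₂ hy.2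
  have h₃ := hh ha₁ hx' hx'.1 hy hy' hyy'
  have h₄ := hh hx' hb₁ hx'.2 hy hy' hyy'
  simp only [boxIncr] at h₁ h₂ h₃ h₄ ⊢
  rw [abs_le]
  constructor <;> linarith

lemma tendsto_boxIncr_corner (hh : TwoIncreasingOn h (Icc a₁ b₁) (Icc a₂ b₂)) {x y : ℝ}
    {xs ys : ℕ → ℝ} (hx : x ∈ Icc a₁ b₁) (hxs : ∀ m, xs m ∈ Icc a₁ b₁) (hxxs : ∀ m, x ≤ xs m)
    (hy : y ∈ Icc a₂ b₂) (hys : ∀ m, ys m ∈ Icc a₂ b₂) (hyys : ∀ m, y ≤ ys m)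
    (hfst : Tendsto (fun m => boxIncr h (xs m) b₁ a₂ b₂) atTop (𝓝 (boxIncr h x b₁ a₂ b₂)))
    (hsnd : Tendsto (fun m => boxIncr h a₁ b₁ (ys m) b₂) atTop (𝓝 (boxIncr h a₁ b₁ y b₂))) :
    Tendsto (fun m => boxIncr h (xs m) b₁ (ys m) b₂) atTop (𝓝 (boxIncr h x b₁ y b₂)) := by
  have hfst' := (tendsto_const_nhds (x := boxIncr h x b₁ a₂ b₂)).sub hfst
  have hsnd' := (tendsto_const_nhds (x := boxIncr h a₁ b₁ y b₂)).sub hsnd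
  rw [sub_self] at hfst' hsnd'
  refine tendsto_iff_dist_tendsto_zero.2 (squeeze_zero (fun _ => dist_nonneg) (fun m => ?_)
    (by simpa using hfst'.add hsnd'))
  rw [Real.dist_eq, abs_sub_comm]
  convert hh.abs_boxIncr_sub_le hx (hxs m) (hxxs m) hy (hys m) (hyys m) using 2 <;>
    simp only [boxIncr] <;> ring

end TwoIncreasingOn

end BoxIncr

section Grid

variable (S : Finset ℝ) (b : ℝ)

/-- Indices `≥ #S` give `b`, which serves as the top grid point. -/
noncomputable def gridPt (i : ℕ) : ℝ := (S.sort (· ≤ ·)).getD i b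

/-- Junk value `0` when `b < x`, where the set is empty. -/
noncomputable def gridIdx (x : ℝ) : ℕ := sInf {i | x ≤ gridPt S b i}

noncomputable def gridCeil (x : ℝ) : ℝ := gridPt S b (gridIdx S b x)

variable {S b}

lemma gridPt_card : gridPt S b S.card = b :=
  List.getD_eq_default _ _ (Finset.length_sort _).le

lemma gridPt_mem_Icc {a : ℝ} (hab : a ≤ b) (hS : ∀ u ∈ S, u ∈ Icc a b) (i : ℕ) :
    gridPt S b i ∈ Icc a b := by
  rw [gridPt]
  by_cases hi : i < (S.sort (· ≤ ·)).length
  · rw [List.getD_eq_getElem _ _ hi]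
    exact hS _ ((Finset.mem_sort _).1 (List.getElem_mem _))
  · rw [List.getD_eq_default _ _ (not_lt.1 hi)]
    exact right_mem_Icc.2 hab

lemma monotone_gridPt (hS : ∀ u ∈ S, u ≤ b) : Monotone (gridPt S b) := by
  intro i j hij
  simp only [gridPt]
  by_cases hj : j < (S.sort (· ≤ ·)).length
  · have hi := hij.trans_lt hj
    rw [List.getD_eq_getElem _ _ hi, List.getD_eq_getElem _ _ hj]
    rcases hij.eq_or_lt with rfl | hlt
    · exact le_rfl
    · exact List.pairwise_iff_getElem.1 (Finset.pairwise_sort S (· ≤ ·)) i j hi hj hlt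
  · rw [List.getD_eq_default _ _ (not_lt.1 hj)]
    by_cases hi : i < (S.sort (· ≤ ·)).length
    · rw [List.getD_eq_getElem _ _ hi]
      exact hS _ ((Finset.mem_sort _).1 (List.getElem_mem _))
    · rw [List.getD_eq_default _ _ (not_lt.1 hi)]

lemma exists_gridPt_eq {u : ℝ} (hu : u ∈ S) : ∃ i, gridPt S b i = u := by
  obtain ⟨i, hi, rfl⟩ := List.mem_iff_getElem.1 ((Finset.mem_sort (· ≤ ·)).2 hu)
  exact ⟨i, List.getD_eq_getElem _ _ hi⟩

lemma gridIdx_le {x : ℝ} {i : ℕ} (hx : x ≤ gridPt S b i) : gridIdx S b x ≤ i :=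
  Nat.sInf_le hx

lemma gridIdx_le_card {x : ℝ} (hx : x ≤ b) : gridIdx S b x ≤ S.card :=
  gridIdx_le (by rwa [gridPt_card])

lemma le_gridCeil {x : ℝ} (hx : x ≤ b) : x ≤ gridCeil S b x :=
  Nat.sInf_mem (s := {i | x ≤ gridPt S b i}) ⟨S.card, by rwa [Set.mem_ofPred_eq, gridPt_card]⟩

lemma le_gridPt_iff (hS : ∀ u ∈ S, u ≤ b) {x : ℝ} (hx : x ≤ b) {i : ℕ} :
    x ≤ gridPt S b i ↔ gridIdx S b x ≤ i :=
  ⟨gridIdx_le, fun hi => (le_gridCeil hx).trans (monotone_gridPt hS hi)⟩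

lemma gridCeil_le (hS : ∀ u ∈ S, u ≤ b) {x u : ℝ} (hu : u ∈ S) (hxu : x ≤ u) :
    gridCeil S b x ≤ u := by
  obtain ⟨i, rfl⟩ := exists_gridPt_eq (b := b) hu
  exact monotone_gridPt hS (gridIdx_le hxu)

lemma gridCeil_of_mem (hS : ∀ u ∈ S, u ≤ b) {x : ℝ} (hx : x ∈ S) : gridCeil S b x = x :=
  (gridCeil_le hS hx le_rfl).antisymm (le_gridCeil (hS x hx))

end Grid

noncomputable def truncGrid (a b : ℝ) (d : ℕ → ℝ) (m : ℕ) : Finset ℝ :=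
  ((Finset.range m).image d).filter (· ∈ Icc a b)

section TruncGrid

variable {a b : ℝ} {d : ℕ → ℝ}

lemma mem_Icc_of_mem_truncGrid {m : ℕ} {u : ℝ} (hu : u ∈ truncGrid a b d m) : u ∈ Icc a b :=
  (Finset.mem_filter.1 hu).2

lemma mem_truncGrid {k m : ℕ} (hkm : k < m) (hk : d k ∈ Icc a b) : d k ∈ truncGrid a b d m :=
  Finset.mem_filter.2 ⟨Finset.mem_image_of_mem d (Finset.mem_range.2 hkm), hk⟩

lemma tendsto_gridCeil_truncGrid (hab : a ≤ b) (hd : DenseRange d) {x : ℝ} (hx : x ∈ Icc a b) :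
    Tendsto (fun m => gridCeil (truncGrid a b d m) b x) atTop (𝓝[Icc a b] x) := by
  have hmem : ∀ m, gridCeil (truncGrid a b d m) b x ∈ Icc a b := fun _ =>
    gridPt_mem_Icc hab (fun _ => mem_Icc_of_mem_truncGrid) _
  refine tendsto_nhdsWithin_iff.2 ⟨tendsto_order.2 ⟨fun c hc => ?_, fun c hc => ?_⟩,
    Eventually.of_forall hmem⟩
  · exact Eventually.of_forall fun _ => hc.trans_le (le_gridCeil hx.2)
  · by_cases hbc : b < c
    · exact Eventually.of_forall fun m => (hmem m).2.trans_lt hbc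
    obtain ⟨_, ⟨k, rfl⟩, hxk, hkc⟩ := hd.exists_between hc
    have hk : d k ∈ Icc a b := ⟨hx.1.trans hxk.le, hkc.le.trans (not_lt.1 hbc)⟩
    exact eventually_atTop.2 ⟨k + 1, fun m hm =>
      (gridCeil_le (fun _ hu => (mem_Icc_of_mem_truncGrid hu).2) (mem_truncGrid hm hk)
        hxk.le).trans_lt hkc⟩

lemma eventually_gridCeil_truncGrid_eq {k : ℕ} (hk : d k ∈ Icc a b) :
    ∀ᶠ m in atTop, gridCeil (truncGrid a b d m) b (d k) = d k :=
  eventually_atTop.2 ⟨k + 1, fun _ hm =>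
    gridCeil_of_mem (fun _ hu => (mem_Icc_of_mem_truncGrid hu).2) (mem_truncGrid hm hk)⟩

/-- The grids enumerate the countably many discontinuities of `g` together with the rationals: the
grid ceiling of a discontinuity is eventually the point itself, and elsewhere it tends to `x`. -/
lemma AntitoneOn.exists_tendsto_comp_gridCeil (hab : a ≤ b) {g : ℝ → ℝ}
    (hg : AntitoneOn g (Icc a b)) :
    ∃ d : ℕ → ℝ, ∀ x ∈ Icc a b,
      Tendsto (fun m => g (gridCeil (truncGrid a b d m) b x)) atTop (𝓝 (g x)) := by
  obtain ⟨d, hd⟩ := (hg.countable_not_continuousWithinAt.union (countable_range ((↑) : ℚ → ℝ))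
    ).exists_eq_range ⟨_, Or.inr ⟨0, rfl⟩⟩
  have hdense : DenseRange d := Rat.denseRange_cast.mono (hd ▸ subset_union_right)
  refine ⟨d, fun x hx => ?_⟩
  by_cases hxd : x ∈ range d
  · obtain ⟨k, rfl⟩ := hxd
    exact tendsto_const_nhds.congr'
      ((eventually_gridCeil_truncGrid_eq hx).mono fun _ hm => congrArg g hm.symm)
  · have hcont : ContinuousWithinAt g (Icc a b) x := by
      by_contra hc
      exact hxd (hd ▸ Or.inl ⟨hx, hc⟩)
    exact hcont.tendsto.comp (tendsto_gridCeil_truncGrid hab hdense hx)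

end TruncGrid

section GridStep

variable (h : ℝ × ℝ → ℝ) (S T : Finset ℝ) (b₁ b₂ : ℝ)

noncomputable def gridStep (p : ℝ × ℝ) : ℝ :=
  ∑ i ∈ Finset.range S.card, ∑ j ∈ Finset.range T.card,
    boxIncr h (gridPt S b₁ i) (gridPt S b₁ (i + 1)) (gridPt T b₂ j) (gridPt T b₂ (j + 1)) *
      (Iic (gridPt S b₁ i, gridPt T b₂ j)).indicator 1 p

lemma measurable_gridStep : Measurable (gridStep h S T b₁ b₂) :=
  Finset.measurable_sum _ fun _ _ => Finset.measurable_sum _ fun _ _ =>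
    measurable_const.mul (measurable_one.indicator measurableSet_Iic)

lemma integral_gridStep (μ : Measure (ℝ × ℝ)) [IsFiniteMeasure μ] :
    ∫ p, gridStep h S T b₁ b₂ p ∂μ =
      ∑ i ∈ Finset.range S.card, ∑ j ∈ Finset.range T.card,
        boxIncr h (gridPt S b₁ i) (gridPt S b₁ (i + 1)) (gridPt T b₂ j) (gridPt T b₂ (j + 1)) *
          μ.real (Iic (gridPt S b₁ i, gridPt T b₂ j)) := by
  have hint : ∀ c : ℝ × ℝ, Integrable ((Iic c).indicator 1) μ := fun c =>
    (integrable_const (1 : ℝ)).indicator measurableSet_Iic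
  simp only [gridStep]
  rw [integral_finsetSum _ fun _ _ => integrable_finsetSum _ fun _ _ =>
    (hint _).const_mul _]
  refine Finset.sum_congr rfl fun i _ => ?_
  rw [integral_finsetSum _ fun _ _ => (hint _).const_mul _]
  refine Finset.sum_congr rfl fun j _ => ?_
  rw [integral_const_mul, integral_indicator_one measurableSet_Iic]

variable {h S T b₁ b₂}

/-- The double sum telescopes to the increment over the box from the grid ceiling of `p` to
`(b₁, b₂)`. -/
lemma gridStep_eq (hS : ∀ u ∈ S, u ≤ b₁) (hT : ∀ v ∈ T, v ≤ b₂) {p : ℝ × ℝ} (hp : p ≤ (b₁, b₂)) :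
    gridStep h S T b₁ b₂ p = boxIncr h (gridCeil S b₁ p.1) b₁ (gridCeil T b₂ p.2) b₂ := by
  have hsum : ∀ (K i₀ : ℕ) (f : ℕ → ℝ),
      ∑ i ∈ Finset.range K, (if i₀ ≤ i then f i else 0) = ∑ i ∈ Finset.Ico i₀ K, f i := by
    intro K i₀ f
    rw [← Finset.sum_filter, Finset.range_eq_Ico, Finset.Ico_filter_le, max_eq_right i₀.zero_le]
  simp only [gridStep, indicator_apply, mem_Iic, Prod.le_def, le_gridPt_iff hS hp.1,
    le_gridPt_iff hT hp.2, ite_and, Pi.one_apply, mul_ite, mul_one, mul_zero, ← Finset.ite_sum_zero,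
    hsum]
  rw [sum_Ico_sum_Ico_boxIncr _ _ _ (gridIdx_le_card hp.1) (gridIdx_le_card hp.2), gridPt_card,
    gridPt_card, gridCeil, gridCeil]

lemma integral_gridStep_le {a₁ a₂ : ℝ} (hh : TwoIncreasingOn h (Icc a₁ b₁) (Icc a₂ b₂))
    (hab₁ : a₁ ≤ b₁) (hab₂ : a₂ ≤ b₂) (hS : ∀ u ∈ S, u ∈ Icc a₁ b₁) (hT : ∀ v ∈ T, v ∈ Icc a₂ b₂)
    {μ ν : Measure (ℝ × ℝ)} [IsFiniteMeasure μ] [IsFiniteMeasure ν]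
    (hcdf : ∀ p ∈ Icc (a₁, a₂) (b₁, b₂), ν (Iic p) ≤ μ (Iic p)) :
    ∫ p, gridStep h S T b₁ b₂ p ∂ν ≤ ∫ p, gridStep h S T b₁ b₂ p ∂μ := by
  rw [integral_gridStep, integral_gridStep]
  refine Finset.sum_le_sum fun i _ => Finset.sum_le_sum fun j _ => ?_
  have hx := gridPt_mem_Icc hab₁ hS
  have hy := gridPt_mem_Icc hab₂ hT
  refine mul_le_mul_of_nonneg_left ?_ (hh (hx i) (hx (i + 1)) (monotone_gridPt
    (fun u hu => (hS u hu).2) i.le_succ) (hy j) (hy (j + 1))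
    (monotone_gridPt (fun v hv => (hT v hv).2) j.le_succ))
  exact ENNReal.toReal_mono (measure_ne_top _ _)
    (hcdf _ ⟨⟨(hx i).1, (hy j).1⟩, ⟨(hx i).2, (hy j).2⟩⟩)

end GridStep

namespace TwoIncreasingOn

variable {h : ℝ × ℝ → ℝ} {a₁ b₁ a₂ b₂ : ℝ}

lemma tendsto_integral_gridStep (hh : TwoIncreasingOn h (Icc a₁ b₁) (Icc a₂ b₂))
    (hab₁ : a₁ ≤ b₁) (hab₂ : a₂ ≤ b₂) {C : ℝ} (hC : ∀ p, |h p| ≤ C) {S T : ℕ → Finset ℝ}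
    (hS : ∀ m, ∀ u ∈ S m, u ∈ Icc a₁ b₁) (hT : ∀ m, ∀ v ∈ T m, v ∈ Icc a₂ b₂)
    (hfst : ∀ x ∈ Icc a₁ b₁, Tendsto (fun m => boxIncr h (gridCeil (S m) b₁ x) b₁ a₂ b₂) atTop
      (𝓝 (boxIncr h x b₁ a₂ b₂)))
    (hsnd : ∀ y ∈ Icc a₂ b₂, Tendsto (fun m => boxIncr h a₁ b₁ (gridCeil (T m) b₂ y) b₂) atTop
      (𝓝 (boxIncr h a₁ b₁ y b₂)))
    (μ : Measure (ℝ × ℝ)) [IsFiniteMeasure μ] (hμ : ∀ᵐ p ∂μ, p ∈ Icc (a₁, a₂) (b₁, b₂)) :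
    Tendsto (fun m => ∫ p, gridStep h (S m) (T m) b₁ b₂ p ∂μ) atTop
      (𝓝 (∫ p, boxIncr h p.1 b₁ p.2 b₂ ∂μ)) := by
  have heq : ∀ m, ∀ᵐ p ∂μ, gridStep h (S m) (T m) b₁ b₂ p =
      boxIncr h (gridCeil (S m) b₁ p.1) b₁ (gridCeil (T m) b₂ p.2) b₂ := fun m =>
    hμ.mono fun p hp =>
      gridStep_eq (fun u hu => (hS m u hu).2) (fun v hv => (hT m v hv).2) hp.2
  refine tendsto_integral_of_dominated_convergence (fun _ => 4 * C)
    (fun _ => (measurable_gridStep _ _ _ _ _).aestronglyMeasurable) (integrable_const _)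
    (fun m => (heq m).mono fun p hp => hp ▸ abs_boxIncr_le hC _ _ _ _) ?_
  filter_upwards [hμ, ae_all_iff.2 heq] with p hp hpeq
  simp only [hpeq]
  exact hh.tendsto_boxIncr_corner ⟨hp.1.1, hp.2.1⟩ (fun m => gridPt_mem_Icc hab₁ (hS m) _)
    (fun _ => le_gridCeil hp.2.1) ⟨hp.1.2, hp.2.2⟩ (fun m => gridPt_mem_Icc hab₂ (hT m) _)
    (fun _ => le_gridCeil hp.2.2) (hfst p.1 ⟨hp.1.1, hp.2.1⟩) (hsnd p.2 ⟨hp.1.2, hp.2.2⟩)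

theorem integral_boxIncr_le (hh : TwoIncreasingOn h (Icc a₁ b₁) (Icc a₂ b₂))
    (hab₁ : a₁ ≤ b₁) (hab₂ : a₂ ≤ b₂) {C : ℝ} (hC : ∀ p, |h p| ≤ C)
    {μ ν : Measure (ℝ × ℝ)} [IsFiniteMeasure μ] [IsFiniteMeasure ν]
    (hμ : ∀ᵐ p ∂μ, p ∈ Icc (a₁, a₂) (b₁, b₂)) (hν : ∀ᵐ p ∂ν, p ∈ Icc (a₁, a₂) (b₁, b₂))
    (hcdf : ∀ p ∈ Icc (a₁, a₂) (b₁, b₂), ν (Iic p) ≤ μ (Iic p)) :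
    ∫ p, boxIncr h p.1 b₁ p.2 b₂ ∂ν ≤ ∫ p, boxIncr h p.1 b₁ p.2 b₂ ∂μ := by
  obtain ⟨dx, hdx⟩ := (hh.antitoneOn_boxIncr_fst hab₂).exists_tendsto_comp_gridCeil hab₁
  obtain ⟨dy, hdy⟩ := (hh.antitoneOn_boxIncr_snd hab₁).exists_tendsto_comp_gridCeil hab₂
  have hS : ∀ m, ∀ u ∈ truncGrid a₁ b₁ dx m, u ∈ Icc a₁ b₁ := fun _ _ => mem_Icc_of_mem_truncGrid
  have hT : ∀ m, ∀ v ∈ truncGrid a₂ b₂ dy m, v ∈ Icc a₂ b₂ := fun _ _ => mem_Icc_of_mem_truncGrid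
  exact le_of_tendsto_of_tendsto'
    (hh.tendsto_integral_gridStep hab₁ hab₂ hC hS hT hdx hdy ν hν)
    (hh.tendsto_integral_gridStep hab₁ hab₂ hC hS hT hdx hdy μ hμ)
    fun m => integral_gridStep_le hh hab₁ hab₂ (hS m) (hT m) hcdf

end TwoIncreasingOn

lemma indicator_one_Iic_add_le {α : Type*} [Lattice α] (c p q : α) :
    (Iic c).indicator (1 : α → ℝ) p + (Iic c).indicator 1 q ≤
      (Iic c).indicator 1 (p ⊔ q) + (Iic c).indicator 1 (p ⊓ q) := by
  by_cases hp : p ≤ c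
  · by_cases hq : q ≤ c <;> simp [hp, hq, inf_le_of_left_le hp]
  by_cases hq : q ≤ c
  · simp [hp, hq, inf_le_of_right_le hq]
  · simpa [hp, hq] using indicator_nonneg (fun _ _ => zero_le_one) (p ⊓ q) (f := (1 : α → ℝ))

lemma integral_comp_eq_of_map_eq {α β : Type*} [MeasurableSpace α] [MeasurableSpace β]
    {μ ν : Measure α} {φ : α → β} (hφ : Measurable φ) (hmap : μ.map φ = ν.map φ) {f : β → ℝ}
    (hf : Measurable f) : ∫ x, f (φ x) ∂μ = ∫ x, f (φ x) ∂ν := by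
  rw [← integral_map hφ.aemeasurable hf.aestronglyMeasurable, hmap,
    integral_map hφ.aemeasurable hf.aestronglyMeasurable]

lemma integral_eq_integral_boxIncr_add {h : ℝ × ℝ → ℝ} (hmeas : Measurable h) {C : ℝ}
    (hC : ∀ p, |h p| ≤ C) (b₁ b₂ : ℝ) (μ : Measure (ℝ × ℝ)) [IsProbabilityMeasure μ] :
    ∫ p, h p ∂μ = ∫ p, boxIncr h p.1 b₁ p.2 b₂ ∂μ + ∫ p, h (p.1, b₂) ∂μ + ∫ p, h (b₁, p.2) ∂μ
      - h (b₁, b₂) := by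
  have hint : ∀ {f : ℝ × ℝ → ℝ}, Measurable f → (∀ p, |f p| ≤ C) → Integrable f μ :=
    fun hf hfC => .of_bound hf.aestronglyMeasurable C (.of_forall hfC)
  have h₀ := hint hmeas hC
  have h₁ : Integrable (fun p : ℝ × ℝ => h (p.1, b₂)) μ := hint (by fun_prop) fun _ => hC _
  have h₂ : Integrable (fun p : ℝ × ℝ => h (b₁, p.2)) μ := hint (by fun_prop) fun _ => hC _
  have hsplit : (fun p : ℝ × ℝ => boxIncr h p.1 b₁ p.2 b₂) =
      fun p => h p - h (p.1, b₂) - h (b₁, p.2) + h (b₁, b₂) := by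
    ext p; rw [boxIncr]; ring
  have h₀₁ : Integrable (fun p : ℝ × ℝ => h p - h (p.1, b₂)) μ := h₀.sub h₁
  have h₀₁₂ : Integrable (fun p : ℝ × ℝ => h p - h (p.1, b₂) - h (b₁, p.2)) μ := h₀₁.sub h₂
  rw [hsplit, integral_add h₀₁₂ (integrable_const _), integral_sub h₀₁ h₂, integral_sub h₀ h₁,
    integral_const, probReal_univ, one_smul]
  ring

lemma measure_setOf_mem_and_le {R : Set (ℝ × ℝ)} {μ : Measure (ℝ × ℝ)} (hμ : μ Rᶜ = 0) (x y : ℝ) :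
    μ {p | p ∈ R ∧ p.1 ≤ x ∧ p.2 ≤ y} = μ (Iic (x, y)) := by
  rw [← measure_inter_conull (s := Iic (x, y)) hμ, inter_comm]
  rfl

/-- For Borel probability measures `F`, `G` on the rectangle
`R = [a₁,b₁] × [a₂,b₂] ⊆ ℝ²` with the same coordinate marginals, domination of `G` by `F`
in the supermodular order is equivalent to pointwise domination of the joint CDFs. -/
theorem supermodular_order_iff_cdf_domination
    (a₁ b₁ a₂ b₂ : ℝ) (R : Set (ℝ × ℝ)) (hR : R = Set.Icc (a₁, a₂) (b₁, b₂))
    (F G : Measure (ℝ × ℝ)) [IsProbabilityMeasure F] [IsProbabilityMeasure G]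
    (hFsupp : F Rᶜ = 0) (hGsupp : G Rᶜ = 0)
    (hmarg1 : F.map Prod.fst = G.map Prod.fst)
    (hmarg2 : F.map Prod.snd = G.map Prod.snd) :
    (∀ h : ℝ × ℝ → ℝ, Measurable h → (∃ C, ∀ p, |h p| ≤ C) →
        (∀ p ∈ R, ∀ q ∈ R, h p + h q ≤ h (p ⊔ q) + h (p ⊓ q)) →
        ∫ p, h p ∂G ≤ ∫ p, h p ∂F) ↔
      (∀ x y : ℝ, (x, y) ∈ R →
        G {p | p ∈ R ∧ p.1 ≤ x ∧ p.2 ≤ y} ≤ F {p | p ∈ R ∧ p.1 ≤ x ∧ p.2 ≤ y}) := by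
  simp only [measure_setOf_mem_and_le hFsupp, measure_setOf_mem_and_le hGsupp]
  constructor
  · intro hsm x y _
    have := hsm _ (measurable_one.indicator measurableSet_Iic)
      ⟨1, fun p => by by_cases hp : p ∈ Iic (x, y) <;> simp [hp]⟩
      fun p _ q _ => indicator_one_Iic_add_le (x, y) p q
    rwa [integral_indicator_one measurableSet_Iic, integral_indicator_one measurableSet_Iic,
      measureReal_def, measureReal_def, ENNReal.toReal_le_toReal (measure_ne_top _ _)
        (measure_ne_top _ _)] at this
  · rintro hcdf h hmeas ⟨C, hC⟩ hsm
    subst hR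
    obtain ⟨hab₁, hab₂⟩ : (a₁, a₂) ≤ (b₁, b₂) := by
      by_contra hne
      simp [Icc_eq_empty hne] at hFsupp
    have hh : TwoIncreasingOn h (Icc a₁ b₁) (Icc a₂ b₂) :=
      twoIncreasingOn_of_supermodularOn (by rwa [Icc_prod_Icc])
    have hbox := hh.integral_boxIncr_le hab₁ hab₂ hC (ae_iff.2 hFsupp) (ae_iff.2 hGsupp)
      fun p hp => hcdf p.1 p.2 hp
    have hfst : ∫ p, h (p.1, b₂) ∂F = ∫ p, h (p.1, b₂) ∂G :=
      integral_comp_eq_of_map_eq (f := fun x => h (x, b₂)) measurable_fst hmarg1 (by fun_prop)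
    have hsnd : ∫ p, h (b₁, p.2) ∂F = ∫ p, h (b₁, p.2) ∂G :=
      integral_comp_eq_of_map_eq (f := fun y => h (b₁, y)) measurable_snd hmarg2 (by fun_prop)
    linarith [integral_eq_integral_boxIncr_add hmeas hC b₁ b₂ F,
      integral_eq_integral_boxIncr_add hmeas hC b₁ b₂ G]
end

section
/- Let F and G be Borel probability measures on ∏_{i=1}^n [a_i,b_i] ⊂ ℝⁿ with ∫ h dF ≥ ∫ h dG for every bounded measurable supermodular h (F ≿_SM G). Let u_i : [a_i,b_i] → ℝ be bounded, measurable and nondecreasing for each i, and set I(θ) = ∑_{i=1}^n u_i(θ_i). Then ∫ h(I(θ)) dG(θ) ≥ ∫ h(I(θ)) dF(θ) for every concave h : ℝ → ℝ; in particular, taking h nondecreasing and concave, the pushforward of G under I second-order stochastically dominates the pushforward of F under I. -/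
/-!
Each `θ ↦ uᵢ(θᵢ)` is modular, `f (x ⊔ y) + f (x ⊓ y) = f x + f y`, hence so is `I`; on the box
`I` is also monotone, so `I (x ⊓ y) ≤ I x, I y ≤ I (x ⊔ y)` with the same sum on both sides.
For concave `h` the extreme pair then has the smaller `h`-sum, i.e. `-(h ∘ I)` is supermodular,
and the supermodular order applied to it gives the inequality.
-/

open MeasureTheory Set

def SupermodularOn {α : Type*} [Lattice α] (s : Set α) (f : α → ℝ) : Prop :=
  ∀ x ∈ s, ∀ y ∈ s, f x + f y ≤ f (x ⊔ y) + f (x ⊓ y)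

lemma isSublattice_Icc {α : Type*} [Lattice α] (a b : α) : IsSublattice (Icc a b) :=
  ⟨fun _ hx _ hy => ⟨le_sup_of_le_left hx.1, sup_le hx.2 hy.2⟩,
    fun _ hx _ hy => ⟨le_inf hx.1 hy.1, inf_le_of_left_le hx.2⟩⟩

lemma ConvexOn.map_add_map_le_map_add_map {s : Set ℝ} {g : ℝ → ℝ} (hg : ConvexOn ℝ s g)
    {m M x y : ℝ} (hm : m ∈ s) (hM : M ∈ s) (hmx : m ≤ x) (hxM : x ≤ M) (hsum : x + y = m + M) :
    g x + g y ≤ g m + g M := by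
  -- `x` and `y` are the convex combinations of `m` and `M` with swapped weights.
  obtain ⟨p, q, hp, hq, hpq, rfl⟩ : x ∈ segment ℝ m M := by
    rw [segment_eq_Icc (hmx.trans hxM)]
    exact ⟨hmx, hxM⟩
  have hy : y = q • m + p • M := by
    simp only [smul_eq_mul] at hsum ⊢
    linear_combination hsum - (m + M) * hpq
  have hx_le := hg.2 hm hM hp hq hpq
  have hy_le := hg.2 hm hM hq hp (by rw [add_comm, hpq])
  rw [← hy] at hy_le
  simp only [smul_eq_mul] at hx_le hy_le ⊢
  linear_combination hx_le + hy_le + (g m + g M) * hpq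

lemma ConvexOn.supermodularOn_comp {α : Type*} [Lattice α] {s : Set α} (hs : IsSublattice s)
    {I : α → ℝ} (hImod : ∀ x ∈ s, ∀ y ∈ s, I (x ⊔ y) + I (x ⊓ y) = I x + I y)
    (hImono : MonotoneOn I s) {t : Set ℝ} (hIt : MapsTo I s t) {g : ℝ → ℝ}
    (hg : ConvexOn ℝ t g) : SupermodularOn s (g ∘ I) := by
  intro x hx y hy
  have hsup := hs.supClosed hx hy
  have hinf := hs.infClosed hx hy
  have := hg.map_add_map_le_map_add_map (y := I y) (hIt hinf) (hIt hsup)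
    (hImono hinf hx inf_le_left) (hImono hx hsup le_sup_left) (by linarith [hImod x hx y hy])
  simpa only [Function.comp_apply, add_comm (g (I (x ⊓ y)))] using this

section CoordinateSum

variable {ι α : Type*} [Fintype ι] (u : ι → α → ℝ)

lemma sum_comp_apply_sup_add_sum_comp_apply_inf [LinearOrder α] (x y : ι → α) :
    ∑ i, u i ((x ⊔ y) i) + ∑ i, u i ((x ⊓ y) i) = ∑ i, u i (x i) + ∑ i, u i (y i) := by
  simp only [← Finset.sum_add_distrib, Pi.sup_apply, Pi.inf_apply]
  refine Finset.sum_congr rfl fun i _ => ?_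
  rcases le_total (x i) (y i) with hxy | hyx
  · rw [max_eq_right hxy, min_eq_left hxy, add_comm]
  · rw [max_eq_left hyx, min_eq_right hyx]

lemma monotoneOn_sum_comp_apply [Preorder α] {a b : ι → α} (hu : ∀ i, MonotoneOn (u i) (Icc (a i) (b i))) :
    MonotoneOn (fun θ => ∑ i, u i (θ i)) (Icc a b) :=
  fun _ hx _ hy hxy => Finset.sum_le_sum fun i _ =>
    hu i ⟨hx.1 i, hx.2 i⟩ ⟨hy.1 i, hy.2 i⟩ (hxy i)

lemma exists_abs_sum_comp_apply_le (hu : ∀ i, ∃ C, ∀ x, |u i x| ≤ C) :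
    ∃ C, ∀ θ : ι → α, |∑ i, u i (θ i)| ≤ C := by
  choose C hC using hu
  exact ⟨∑ i, C i, fun θ => (Finset.abs_sum_le_sum_abs _ _).trans
    (Finset.sum_le_sum fun i _ => hC i (θ i))⟩

end CoordinateSum

lemma Continuous.exists_abs_comp_le {α : Type*} {h : ℝ → ℝ} (hh : Continuous h) {f : α → ℝ}
    (hf : ∃ C, ∀ x, |f x| ≤ C) : ∃ K, ∀ x, |h (f x)| ≤ K := by
  obtain ⟨C, hC⟩ := hf
  obtain ⟨K, hK⟩ := (isCompact_Icc (a := -C) (b := C)).exists_bound_of_continuousOn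
    hh.continuousOn
  exact ⟨K, fun x => hK (f x) (abs_le.mp (hC x))⟩

lemma ConcaveOn.continuous {h : ℝ → ℝ} (hh : ConcaveOn ℝ univ h) : Continuous h :=
  continuousOn_univ.mp (hh.continuousOn isOpen_univ)

theorem supermodular_order_implies_sosd_of_rents_general
    (n : ℕ) (a b : Fin n → ℝ)
    (F G : Measure (Fin n → ℝ))
    (hSM : ∀ h : (Fin n → ℝ) → ℝ, Measurable h → (∃ C, ∀ θ, |h θ| ≤ C) →
      (∀ x ∈ Set.Icc a b, ∀ y ∈ Set.Icc a b, h x + h y ≤ h (x ⊔ y) + h (x ⊓ y)) →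
      ∫ θ, h θ ∂G ≤ ∫ θ, h θ ∂F)
    (u : Fin n → ℝ → ℝ)
    (humeas : ∀ i, Measurable (u i))
    (hubd : ∀ i, ∃ C, ∀ x, |u i x| ≤ C)
    (humono : ∀ i, MonotoneOn (u i) (Set.Icc (a i) (b i)))
    (I : (Fin n → ℝ) → ℝ) (hI : ∀ θ, I θ = ∑ i, u i (θ i)) :
    (∀ h : ℝ → ℝ, ConcaveOn ℝ Set.univ h →
      ∫ θ, h (I θ) ∂F ≤ ∫ θ, h (I θ) ∂G) ∧
    (∀ h : ℝ → ℝ, ConcaveOn ℝ Set.univ h → Monotone h →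
      ∫ x, h x ∂(F.map I) ≤ ∫ x, h x ∂(G.map I)) := by
  obtain rfl : I = fun θ => ∑ i, u i (θ i) := funext hI
  have hImeas : Measurable fun θ : Fin n → ℝ => ∑ i, u i (θ i) :=
    Finset.measurable_sum _ fun i _ => (humeas i).comp (measurable_pi_apply i)
  have concave_case (h : ℝ → ℝ) (hh : ConcaveOn ℝ univ h) :
      ∫ θ, h (∑ i, u i (θ i)) ∂F ≤ ∫ θ, h (∑ i, u i (θ i)) ∂G := by
    obtain ⟨K, hK⟩ := hh.continuous.exists_abs_comp_le (exists_abs_sum_comp_apply_le u hubd)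
    have hsuper : SupermodularOn (Icc a b) ((-h) ∘ fun θ => ∑ i, u i (θ i)) :=
      hh.neg.supermodularOn_comp (isSublattice_Icc a b)
        (fun x _ y _ => sum_comp_apply_sup_add_sum_comp_apply_inf u x y)
        (monotoneOn_sum_comp_apply u humono) (mapsTo_univ _ _)
    have := hSM _ (hh.continuous.measurable.comp hImeas).neg
      ⟨K, fun θ => (abs_neg _).trans_le (hK θ)⟩ hsuper
    simpa only [Function.comp_apply, Pi.neg_apply, integral_neg, neg_le_neg_iff] using this
  refine ⟨concave_case, fun h hh _ => ?_⟩
  rw [integral_map hImeas.aemeasurable hh.continuous.aestronglyMeasurable,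
    integral_map hImeas.aemeasurable hh.continuous.aestronglyMeasurable]
  exact concave_case h hh

/-- If `F` dominates `G` in the supermodular order on the box
`∏ᵢ [aᵢ,bᵢ]`, and `I(θ) = ∑ i, uᵢ(θᵢ)` with each `uᵢ` bounded, measurable and nondecreasing,
then `∫ h ∘ I dG ≥ ∫ h ∘ I dF` for every concave `h : ℝ → ℝ`; in particular the pushforward
of `G` under `I` second-order stochastically dominates the pushforward of `F` under `I`. -/
theorem supermodular_order_implies_sosd_of_rents
    (n : ℕ) (a b : Fin n → ℝ)
    (F G : Measure (Fin n → ℝ)) [IsProbabilityMeasure F] [IsProbabilityMeasure G]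
    (hFsupp : F (Set.Icc a b)ᶜ = 0) (hGsupp : G (Set.Icc a b)ᶜ = 0)
    (hSM : ∀ h : (Fin n → ℝ) → ℝ, Measurable h → (∃ C, ∀ θ, |h θ| ≤ C) →
      (∀ x ∈ Set.Icc a b, ∀ y ∈ Set.Icc a b, h x + h y ≤ h (x ⊔ y) + h (x ⊓ y)) →
      ∫ θ, h θ ∂G ≤ ∫ θ, h θ ∂F)
    (u : Fin n → ℝ → ℝ)
    (humeas : ∀ i, Measurable (u i))
    (hubd : ∀ i, ∃ C, ∀ x, |u i x| ≤ C)
    (humono : ∀ i, MonotoneOn (u i) (Set.Icc (a i) (b i)))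
    (I : (Fin n → ℝ) → ℝ) (hI : ∀ θ, I θ = ∑ i, u i (θ i)) :
    (∀ h : ℝ → ℝ, ConcaveOn ℝ Set.univ h →
      ∫ θ, h (I θ) ∂F ≤ ∫ θ, h (I θ) ∂G) ∧
    (∀ h : ℝ → ℝ, ConcaveOn ℝ Set.univ h → Monotone h →
      ∫ x, h x ∂(F.map I) ≤ ∫ x, h x ∂(G.map I)) :=
  supermodular_order_implies_sosd_of_rents_general n a b F G hSM u humeas hubd humono I hI
end

section
/- Let X, X′ be independent bounded real random variables and Y, Y′ be independent bounded real random variables. If X second-order stochastically dominates Y and X′ second-order stochastically dominates Y′, then X + X′ second-order stochastically dominates Y + Y′. -/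
open MeasureTheory ProbabilityTheory

/-- The CDF of a real random variable `X` under `P`. -/
noncomputable def rvCdf {Ω : Type*} [MeasurableSpace Ω] (P : Measure Ω) (X : Ω → ℝ) : ℝ → ℝ :=
  fun x => (P {ω | X ω ≤ x}).toReal

/-- Second-order stochastic dominance: `X ≿_SOSD Y` iff the integrated CDF of `X`
is everywhere below that of `Y`. -/
def SOSD {Ω : Type*} [MeasurableSpace Ω] (P : Measure Ω) (X Y : Ω → ℝ) : Prop :=
  ∀ t : ℝ, ∫ x in Set.Iic t, rvCdf P X x ≤ ∫ x in Set.Iic t, rvCdf P Y x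

/-!
Write `S_μ(t) = ∫ (t - y)⁺ dμ(y)` for the expected shortfall of a law `μ` on `ℝ`. By Tonelli,
`∫_{-∞}^t F_μ = S_μ(t)`, so (for laws bounded below, where everything is finite) `X ≿_SOSD Y`
says exactly `S_{law X} ≤ S_{law Y}` pointwise. For independent summands the law of the sum is the
convolution of the laws, and `S_{μ ∗ ν}(t) = ∫ S_ν(t - x) dμ(x)`; this is monotone in `ν`, and by
commutativity of convolution also in `μ`.
-/

open Set ENNReal

noncomputable def shortfall (μ : Measure ℝ) (t : ℝ) : ℝ≥0∞ :=
  ∫⁻ y, ENNReal.ofReal (t - y) ∂μ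

lemma lintegral_measure_Iic_eq_shortfall (μ : Measure ℝ) [SFinite μ] (t : ℝ) :
    ∫⁻ x in Iic t, μ (Iic x) = shortfall μ t := by
  have hmeas : Measurable (Function.uncurry fun x y : ℝ => (Iic x).indicator (1 : ℝ → ℝ≥0∞) y) := by
    change Measurable ({p : ℝ × ℝ | p.2 ≤ p.1}.indicator 1)
    exact measurable_one.indicator (measurableSet_le measurable_snd measurable_fst)
  have hinner (y : ℝ) : ∫⁻ x in Iic t, (Iic x).indicator 1 y = ENNReal.ofReal (t - y) := by
    have : (fun x => (Iic x).indicator (1 : ℝ → ℝ≥0∞) y) = (Ici y).indicator 1 := by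
      ext x; simp [indicator_apply]
    rw [this, lintegral_indicator_one measurableSet_Ici, Measure.restrict_apply measurableSet_Ici,
      Ici_inter_Iic, Real.volume_Icc]
  calc ∫⁻ x in Iic t, μ (Iic x)
      = ∫⁻ x in Iic t, ∫⁻ y, (Iic x).indicator 1 y ∂μ := by
        simp only [lintegral_indicator_one measurableSet_Iic]
    _ = ∫⁻ y, (∫⁻ x in Iic t, (Iic x).indicator 1 y) ∂μ :=
        lintegral_lintegral_swap hmeas.aemeasurable
    _ = shortfall μ t := by simp_rw [hinner, shortfall]

lemma integral_rvCdf_eq_shortfall {Ω : Type*} [MeasurableSpace Ω] (P : Measure Ω)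
    [IsFiniteMeasure P] {X : Ω → ℝ} (hX : Measurable X) (t : ℝ) :
    ∫ x in Iic t, rvCdf P X x = (shortfall (P.map X) t).toReal := by
  have hcdf : rvCdf P X = fun x => (P.map X (Iic x)).toReal :=
    funext fun x => by rw [Measure.map_apply hX measurableSet_Iic]; rfl
  have hmono : Monotone fun x => P.map X (Iic x) := fun _ _ h => measure_mono (Iic_subset_Iic.2 h)
  rw [hcdf, integral_toReal hmono.measurable.aemeasurable (.of_forall fun _ => measure_lt_top _ _),
    lintegral_measure_Iic_eq_shortfall]

lemma shortfall_ne_top {μ : Measure ℝ} [IsFiniteMeasure μ] {c : ℝ} (hc : ∀ᵐ y ∂μ, c ≤ y)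
    (t : ℝ) : shortfall μ t ≠ ∞ := by
  have hle : ∀ᵐ y ∂μ, ENNReal.ofReal (t - y) ≤ ENNReal.ofReal (t - c) :=
    hc.mono fun y hy => ENNReal.ofReal_le_ofReal (by linarith)
  refine ((lintegral_mono_ae hle).trans_lt ?_).ne
  rw [lintegral_const]
  exact ENNReal.mul_lt_top ofReal_lt_top (measure_lt_top _ _)

lemma sosd_iff_shortfall_le {Ω : Type*} [MeasurableSpace Ω] {P : Measure Ω} [IsFiniteMeasure P]
    {X Y : Ω → ℝ} (hX : Measurable X) (hY : Measurable Y)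
    (hXb : ∃ c, ∀ ω, c ≤ X ω) (hYb : ∃ c, ∀ ω, c ≤ Y ω) :
    SOSD P X Y ↔ ∀ t, shortfall (P.map X) t ≤ shortfall (P.map Y) t := by
  have hfin {Z : Ω → ℝ} (hZ : Measurable Z) (hZb : ∃ c, ∀ ω, c ≤ Z ω) (t : ℝ) :
      shortfall (P.map Z) t ≠ ∞ := by
    obtain ⟨c, hc⟩ := hZb
    exact shortfall_ne_top ((ae_map_iff hZ.aemeasurable measurableSet_Ici).2 (.of_forall hc)) t
  simp only [SOSD, integral_rvCdf_eq_shortfall P hX, integral_rvCdf_eq_shortfall P hY]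
  exact forall_congr' fun t => ENNReal.toReal_le_toReal (hfin hX hXb t) (hfin hY hYb t)

lemma shortfall_conv (μ ν : Measure ℝ) [SFinite ν] (t : ℝ) :
    shortfall (μ ∗ ν) t = ∫⁻ x, shortfall ν (t - x) ∂μ := by
  simp only [shortfall, sub_sub]
  exact Measure.lintegral_conv (by fun_prop)

lemma shortfall_conv_le_conv {μ₁ μ₂ ν₁ ν₂ : Measure ℝ} [SFinite μ₁] [SFinite μ₂] [SFinite ν₁]
    [SFinite ν₂] (hμ : ∀ t, shortfall μ₁ t ≤ shortfall μ₂ t)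
    (hν : ∀ t, shortfall ν₁ t ≤ shortfall ν₂ t) (t : ℝ) :
    shortfall (μ₁ ∗ ν₁) t ≤ shortfall (μ₂ ∗ ν₂) t :=
  calc shortfall (μ₁ ∗ ν₁) t
      ≤ shortfall (μ₁ ∗ ν₂) t := by
        simp only [shortfall_conv]; exact lintegral_mono fun x => hν _
    _ = shortfall (ν₂ ∗ μ₁) t := by rw [Measure.conv_comm]
    _ ≤ shortfall (ν₂ ∗ μ₂) t := by
        simp only [shortfall_conv]; exact lintegral_mono fun x => hμ _
    _ = shortfall (μ₂ ∗ ν₂) t := by rw [Measure.conv_comm]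

/-- If `X, X′` are independent, `Y, Y′` are independent, all bounded,
`X ≿_SOSD Y` and `X′ ≿_SOSD Y′`, then `X + X′ ≿_SOSD Y + Y′`. -/
theorem sosd_add_of_indep
    {Ω : Type*} [MeasurableSpace Ω] (P : Measure Ω) [IsProbabilityMeasure P]
    (X X' Y Y' : Ω → ℝ)
    (hX : Measurable X) (hX' : Measurable X') (hY : Measurable Y) (hY' : Measurable Y')
    (hbX : ∃ C, ∀ ω, |X ω| ≤ C) (hbX' : ∃ C, ∀ ω, |X' ω| ≤ C)
    (hbY : ∃ C, ∀ ω, |Y ω| ≤ C) (hbY' : ∃ C, ∀ ω, |Y' ω| ≤ C)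
    (hindX : IndepFun X X' P) (hindY : IndepFun Y Y' P)
    (h₁ : SOSD P X Y) (h₂ : SOSD P X' Y') :
    SOSD P (fun ω => X ω + X' ω) (fun ω => Y ω + Y' ω) := by
  have lower {Z : Ω → ℝ} : (∃ C, ∀ ω, |Z ω| ≤ C) → ∃ c, ∀ ω, c ≤ Z ω :=
    fun ⟨C, hC⟩ => ⟨-C, fun ω => neg_le_of_abs_le (hC ω)⟩
  have lower_add {Z Z' : Ω → ℝ} (hZ : ∃ c, ∀ ω, c ≤ Z ω) (hZ' : ∃ c, ∀ ω, c ≤ Z' ω) :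
      ∃ c, ∀ ω, c ≤ Z ω + Z' ω :=
    let ⟨c, hc⟩ := hZ; let ⟨c', hc'⟩ := hZ'; ⟨c + c', fun ω => add_le_add (hc ω) (hc' ω)⟩
  rw [sosd_iff_shortfall_le hX hY (lower hbX) (lower hbY)] at h₁
  rw [sosd_iff_shortfall_le hX' hY' (lower hbX') (lower hbY')] at h₂
  change SOSD P (X + X') (Y + Y')
  rw [sosd_iff_shortfall_le (hX.add hX') (hY.add hY') (lower_add (lower hbX) (lower hbX'))
    (lower_add (lower hbY) (lower hbY'))]
  have hlawX : P.map (X + X') = P.map X ∗ P.map X' := hindX.map_add_eq_map_conv_map hX hX'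
  have hlawY : P.map (Y + Y') = P.map Y ∗ P.map Y' := hindY.map_add_eq_map_conv_map hY hY'
  rw [hlawX, hlawY]
  exact shortfall_conv_le_conv h₁ h₂
end

section
/- Let X and Y be bounded real random variables with CDFs F_X, F_Y and left-continuous quantile functions q_X(u) = inf{x : F_X(x) ≥ u}, q_Y(u) = inf{x : F_Y(x) ≥ u}. Then X second-order stochastically dominates Y if and only if ∫₀^p q_X(u) du ≥ ∫₀^p q_Y(u) du for every p ∈ [0,1]. -/
/-! Write `G t = ∫_{-∞}^t F` and `H p = ∫_0^p q`. Since `q u ≤ x ↔ u ≤ F x` for `u ∈ (0, 1]`,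
Fubini on the region `{(u, x) | 0 < u ≤ F x, x ≤ t}` gives `G t = F(t) t - H (F t)`, and as
`q ≤ t` exactly on `(0, F t]`, the map `p ↦ p t - H p` on `[0, 1]` is maximal at `p = F t`.
Hence `G` and `H` are Legendre conjugates: `G t = max_p (p t - H p)` and
`H p = max_t (p t - G t)`, the latter attained at `t = q p`. Conjugation reverses order, so
`G_X ≤ G_Y` if and only if `H_Y ≤ H_X`. -/

open MeasureTheory

/-- The (left-continuous) quantile function of `X` under `P`. -/
noncomputable def rvQuantile {Ω : Type*} [MeasurableSpace Ω] (P : Measure Ω) (X : Ω → ℝ) :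
    ℝ → ℝ :=
  fun u => sInf {x : ℝ | u ≤ rvCdf P X x}

open Set ProbabilityTheory

namespace StieltjesFunction

-- `sInf` returns junk outside `u ∈ (0, 1]`, hence the range restrictions below.
noncomputable def quantile (F : StieltjesFunction ℝ) (u : ℝ) : ℝ := sInf {x | u ≤ F x}

variable {F : StieltjesFunction ℝ} {a b : ℝ}

theorem apply_mem_Icc_zero_one (hF₀ : ∀ x < a, F x = 0)
    (hF₁ : ∀ x, b ≤ x → F x = 1) (x : ℝ) : F x ∈ Icc (0 : ℝ) 1 := by
  refine ⟨?_, hF₁ (max x b) (le_max_right _ _) ▸ F.mono (le_max_left _ _)⟩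
  rw [← hF₀ (min x (a - 1)) (by linarith [min_le_right x (a - 1)])]
  exact F.mono (min_le_left _ _)

theorem quantile_le_iff (hF₀ : ∀ x < a, F x = 0) (hF₁ : ∀ x, b ≤ x → F x = 1) {u : ℝ}
    (hu : u ∈ Ioc 0 1) {x : ℝ} : F.quantile u ≤ x ↔ u ≤ F x := by
  have hbdd : BddBelow {x | u ≤ F x} := ⟨a, fun y hy => not_lt.1 fun hya => by
    rw [mem_ofPred_eq, hF₀ y hya] at hy
    exact hu.1.not_ge hy⟩
  have hne : {x | u ≤ F x}.Nonempty := ⟨b, by simp [hF₁ b le_rfl, hu.2]⟩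
  refine ⟨fun hx => ?_, fun hx => csInf_le hbdd hx⟩
  refine ge_of_tendsto ((F.right_continuous x).mono Ioi_subset_Ici_self)
    (eventually_nhdsWithin_of_forall fun y (hy : x < y) => ?_)
  obtain ⟨z, hz, hzy⟩ := (csInf_lt_iff hbdd hne).1 (hx.trans_lt hy)
  exact hz.trans (F.mono hzy.le)

theorem le_quantile (hF₀ : ∀ x < a, F x = 0) (hF₁ : ∀ x, b ≤ x → F x = 1) {u : ℝ}
    (hu : u ∈ Ioc 0 1) : a ≤ F.quantile u := by
  by_contra! h
  have := (quantile_le_iff hF₀ hF₁ hu).1 le_rfl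
  rw [hF₀ _ h] at this
  exact hu.1.not_ge this

theorem quantile_le (hF₀ : ∀ x < a, F x = 0) (hF₁ : ∀ x, b ≤ x → F x = 1) {u : ℝ}
    (hu : u ∈ Ioc 0 1) : F.quantile u ≤ b :=
  (quantile_le_iff hF₀ hF₁ hu).2 (by rw [hF₁ b le_rfl]; exact hu.2)

theorem monotoneOn_quantile (hF₀ : ∀ x < a, F x = 0) (hF₁ : ∀ x, b ≤ x → F x = 1) :
    MonotoneOn F.quantile (Ioc 0 1) := fun _ hu _ hv huv =>
  (quantile_le_iff hF₀ hF₁ hu).2 (huv.trans ((quantile_le_iff hF₀ hF₁ hv).1 le_rfl))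

theorem integrableOn_quantile (hF₀ : ∀ x < a, F x = 0) (hF₁ : ∀ x, b ≤ x → F x = 1) :
    IntegrableOn F.quantile (Icc 0 1) := by
  refine (integrableOn_Icc_iff_integrableOn_Ioc).2 <| .of_bound (by simp)
    (aemeasurable_restrict_of_monotoneOn measurableSet_Ioc
      (monotoneOn_quantile hF₀ hF₁)).aestronglyMeasurable (max |a| |b|) ?_
  refine (ae_restrict_iff' measurableSet_Ioc).2 (ae_of_all _ fun u hu => ?_)
  rw [Real.norm_eq_abs, abs_le]
  constructor
  · linarith [le_quantile hF₀ hF₁ hu, neg_abs_le a, le_max_left |a| |b|]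
  · linarith [quantile_le hF₀ hF₁ hu, le_abs_self b, le_max_right |a| |b|]

theorem intervalIntegrable_quantile (hF₀ : ∀ x < a, F x = 0) (hF₁ : ∀ x, b ≤ x → F x = 1)
    {p q : ℝ} (hp : p ∈ Icc (0 : ℝ) 1) (hq : q ∈ Icc (0 : ℝ) 1) :
    IntervalIntegrable F.quantile volume p q :=
  ((integrableOn_quantile hF₀ hF₁).mono_set (uIcc_subset_Icc hp hq)).intervalIntegrable

theorem lintegral_Iic_eq_lintegral_Ioc_quantile (hF₀ : ∀ x < a, F x = 0)
    (hF₁ : ∀ x, b ≤ x → F x = 1) (t : ℝ) :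
    ∫⁻ x in Iic t, ENNReal.ofReal (F x) =
      ∫⁻ u in Ioc 0 (F t), ENNReal.ofReal (t - F.quantile u) := by
  set A : Set (ℝ × ℝ) := {z | 0 < z.1 ∧ z.1 ≤ F z.2 ∧ z.2 ≤ t}
  have hA : MeasurableSet A := (measurableSet_lt measurable_const measurable_fst).inter
      ((measurableSet_le measurable_fst (F.mono.measurable.comp measurable_snd)).inter
        (measurableSet_le measurable_snd measurable_const))
  have h_row (x : ℝ) : volume ((fun u => (u, x)) ⁻¹' A) =
      (Iic t).indicator (fun x => ENNReal.ofReal (F x)) x := by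
    by_cases hx : x ≤ t
    · have : (fun u => (u, x)) ⁻¹' A = Ioc 0 (F x) := by ext u; simp [A, hx]
      rw [this, Real.volume_Ioc, sub_zero, indicator_of_mem (show x ∈ Iic t from hx)]
    · have : (fun u => (u, x)) ⁻¹' A = ∅ := by ext u; simp [A, hx]
      rw [this, measure_empty, indicator_of_notMem (show x ∉ Iic t from hx)]
  have h_col (u : ℝ) : volume (Prod.mk u ⁻¹' A) =
      (Ioc 0 (F t)).indicator (fun u => ENNReal.ofReal (t - F.quantile u)) u := by
    by_cases hu : u ∈ Ioc 0 (F t)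
    · have hu₁ : u ∈ Ioc 0 1 := ⟨hu.1, hu.2.trans (apply_mem_Icc_zero_one hF₀ hF₁ t).2⟩
      have : Prod.mk u ⁻¹' A = Icc (F.quantile u) t := by
        ext x; simp [A, hu.1, quantile_le_iff hF₀ hF₁ hu₁]
      rw [this, Real.volume_Icc, indicator_of_mem hu]
    · have : Prod.mk u ⁻¹' A = ∅ :=
        eq_empty_of_forall_notMem fun x ⟨h0, hux, hxt⟩ => hu ⟨h0, hux.trans (F.mono hxt)⟩
      rw [this, measure_empty, indicator_of_notMem hu]
  calc ∫⁻ x in Iic t, ENNReal.ofReal (F x) = volume.prod volume A := by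
        rw [Measure.prod_apply_symm hA, ← lintegral_indicator measurableSet_Iic]
        simp_rw [h_row]
    _ = _ := by
        rw [Measure.prod_apply hA, ← lintegral_indicator measurableSet_Ioc]
        simp_rw [h_col]

theorem integral_Iic_eq_integral_sub_quantile (hF₀ : ∀ x < a, F x = 0)
    (hF₁ : ∀ x, b ≤ x → F x = 1) (t : ℝ) :
    ∫ x in Iic t, F x = ∫ u in 0..F t, (t - F.quantile u) := by
  have hFt := apply_mem_Icc_zero_one hF₀ hF₁ t
  have hq := intervalIntegrable_quantile hF₀ hF₁ (left_mem_Icc.2 zero_le_one) hFt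
  have h_nonneg : ∀ᵐ u ∂volume.restrict (Ioc 0 (F t)), 0 ≤ t - F.quantile u :=
    (ae_restrict_iff' measurableSet_Ioc).2 <| ae_of_all _ fun u hu =>
      sub_nonneg.2 ((quantile_le_iff hF₀ hF₁ ⟨hu.1, hu.2.trans hFt.2⟩).2 hu.2)
  rw [intervalIntegral.integral_of_le hFt.1,
    integral_eq_lintegral_of_nonneg_ae
      (ae_of_all _ fun x => (apply_mem_Icc_zero_one hF₀ hF₁ x).1)
      F.mono.measurable.aestronglyMeasurable,
    integral_eq_lintegral_of_nonneg_ae h_nonneg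
      (intervalIntegrable_const.sub hq).1.aestronglyMeasurable,
    lintegral_Iic_eq_lintegral_Ioc_quantile hF₀ hF₁]

theorem integral_Iic_eq_mul_sub_integral_quantile (hF₀ : ∀ x < a, F x = 0)
    (hF₁ : ∀ x, b ≤ x → F x = 1) (t : ℝ) :
    ∫ x in Iic t, F x = F t * t - ∫ u in 0..F t, F.quantile u := by
  rw [integral_Iic_eq_integral_sub_quantile hF₀ hF₁, intervalIntegral.integral_sub
    intervalIntegrable_const (intervalIntegrable_quantile hF₀ hF₁ (left_mem_Icc.2 zero_le_one)
      (apply_mem_Icc_zero_one hF₀ hF₁ t)),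
    intervalIntegral.integral_const, smul_eq_mul, sub_zero]

theorem integral_quantile_le_sub_mul (hF₀ : ∀ x < a, F x = 0) (hF₁ : ∀ x, b ≤ x → F x = 1)
    {p : ℝ} (hp : p ∈ Icc (0 : ℝ) 1) (t : ℝ) :
    ∫ u in p..F t, F.quantile u ≤ (F t - p) * t := by
  have hFt := apply_mem_Icc_zero_one hF₀ hF₁ t
  have hq := intervalIntegrable_quantile hF₀ hF₁ hp hFt
  rcases le_or_gt p (F t) with hpt | htp
  · calc ∫ u in p..F t, F.quantile u ≤ ∫ _ in p..F t, t :=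
          intervalIntegral.integral_mono_on_of_le_Ioo hpt hq intervalIntegrable_const
            fun u hu => (quantile_le_iff hF₀ hF₁ ⟨hp.1.trans_lt hu.1, hu.2.le.trans hFt.2⟩).2
              hu.2.le
      _ = (F t - p) * t := by simp
  · have : (p - F t) * t ≤ ∫ u in F t..p, F.quantile u := calc
        (p - F t) * t = ∫ _ in F t..p, t := by simp
        _ ≤ _ := intervalIntegral.integral_mono_on_of_le_Ioo htp.le intervalIntegrable_const
            hq.symm fun u hu => le_of_not_ge fun h => hu.1.not_ge
              ((quantile_le_iff hF₀ hF₁ ⟨hFt.1.trans_lt hu.1, hu.2.le.trans hp.2⟩).1 h)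
    rw [intervalIntegral.integral_symm]
    linarith

theorem mul_sub_integral_quantile_le_integral_Iic (hF₀ : ∀ x < a, F x = 0)
    (hF₁ : ∀ x, b ≤ x → F x = 1) {p : ℝ} (hp : p ∈ Icc (0 : ℝ) 1) (t : ℝ) :
    p * t - ∫ u in 0..p, F.quantile u ≤ ∫ x in Iic t, F x := by
  rw [integral_Iic_eq_mul_sub_integral_quantile hF₀ hF₁ t,
    ← intervalIntegral.integral_add_adjacent_intervals
      (intervalIntegrable_quantile hF₀ hF₁ (left_mem_Icc.2 zero_le_one) hp)
      (intervalIntegrable_quantile hF₀ hF₁ hp (apply_mem_Icc_zero_one hF₀ hF₁ t))]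
  linarith [integral_quantile_le_sub_mul hF₀ hF₁ hp t]

theorem integral_quantile_eq_mul_sub_integral_Iic (hF₀ : ∀ x < a, F x = 0)
    (hF₁ : ∀ x, b ≤ x → F x = 1) {p : ℝ} (hp : p ∈ Ioc (0 : ℝ) 1) :
    ∫ u in 0..p, F.quantile u = p * F.quantile p - ∫ x in Iic (F.quantile p), F x := by
  set t := F.quantile p
  have hpt : p ≤ F t := (quantile_le_iff hF₀ hF₁ hp).1 le_rfl
  have hFt := apply_mem_Icc_zero_one hF₀ hF₁ t
  have h_const : ∫ u in p..F t, F.quantile u = (F t - p) * t := by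
    rw [intervalIntegral.integral_congr (g := fun _ => t) fun u hu => ?_]
    · simp
    rw [uIcc_of_le hpt] at hu
    have hu₁ : u ∈ Ioc 0 1 := ⟨hp.1.trans_le hu.1, hu.2.trans hFt.2⟩
    exact le_antisymm ((quantile_le_iff hF₀ hF₁ hu₁).2 hu.2)
      (monotoneOn_quantile hF₀ hF₁ hp hu₁ hu.1)
  rw [integral_Iic_eq_mul_sub_integral_quantile hF₀ hF₁ t,
    ← intervalIntegral.integral_add_adjacent_intervals
      (intervalIntegrable_quantile hF₀ hF₁ (left_mem_Icc.2 zero_le_one) ⟨hp.1.le, hp.2⟩)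
      (intervalIntegrable_quantile hF₀ hF₁ ⟨hp.1.le, hp.2⟩ hFt), h_const]
  ring

end StieltjesFunction

section RandomVariable

variable {Ω : Type*} [MeasurableSpace Ω] {P : Measure Ω} [IsProbabilityMeasure P] {Z : Ω → ℝ}

theorem rvCdf_eq_cdf_map (hZ : Measurable Z) : rvCdf P Z = cdf (P.map Z) := by
  have := Measure.isProbabilityMeasure_map (μ := P) hZ.aemeasurable
  funext x
  rw [cdf_eq_real, measureReal_def, Measure.map_apply hZ measurableSet_Iic]
  rfl

theorem rvQuantile_eq_quantile_cdf_map (hZ : Measurable Z) :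
    rvQuantile P Z = (cdf (P.map Z)).quantile := by
  unfold rvQuantile
  rw [rvCdf_eq_cdf_map hZ]
  rfl

theorem cdf_map_eq_zero_of_abs_le (hZ : Measurable Z) {C : ℝ} (hC : ∀ ω, |Z ω| ≤ C) :
    ∀ x < -C, cdf (P.map Z) x = 0 := by
  intro x hx
  have : {ω | Z ω ≤ x} = ∅ :=
    eq_empty_of_forall_notMem fun ω hω => (hx.trans_le (neg_le_of_abs_le (hC ω))).not_ge hω
  rw [← rvCdf_eq_cdf_map hZ, rvCdf, this, measure_empty, ENNReal.toReal_zero]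

theorem cdf_map_eq_one_of_abs_le (hZ : Measurable Z) {C : ℝ} (hC : ∀ ω, |Z ω| ≤ C) :
    ∀ x, C ≤ x → cdf (P.map Z) x = 1 := by
  intro x hx
  have : {ω | Z ω ≤ x} = univ :=
    eq_univ_of_forall fun ω => (le_of_abs_le (hC ω)).trans hx
  rw [← rvCdf_eq_cdf_map hZ, rvCdf, this, measure_univ, ENNReal.toReal_one]

end RandomVariable

/-- For bounded random variables, `X ≿_SOSD Y` iff the cumulative quantile
function of `X` dominates that of `Y` on `[0,1]`. -/
theorem sosd_iff_cumulative_quantiles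
    {Ω : Type*} [MeasurableSpace Ω] (P : Measure Ω) [IsProbabilityMeasure P]
    (X Y : Ω → ℝ) (hX : Measurable X) (hY : Measurable Y)
    (hbX : ∃ C, ∀ ω, |X ω| ≤ C) (hbY : ∃ C, ∀ ω, |Y ω| ≤ C) :
    SOSD P X Y ↔
      ∀ p ∈ Set.Icc (0:ℝ) 1,
        ∫ u in (0:ℝ)..p, rvQuantile P Y u ≤ ∫ u in (0:ℝ)..p, rvQuantile P X u := by
  obtain ⟨CX, hCX⟩ := hbX
  obtain ⟨CY, hCY⟩ := hbY
  have hX₀ := cdf_map_eq_zero_of_abs_le (P := P) hX hCX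
  have hX₁ := cdf_map_eq_one_of_abs_le (P := P) hX hCX
  have hY₀ := cdf_map_eq_zero_of_abs_le (P := P) hY hCY
  have hY₁ := cdf_map_eq_one_of_abs_le (P := P) hY hCY
  rw [SOSD, rvCdf_eq_cdf_map hX, rvCdf_eq_cdf_map hY, rvQuantile_eq_quantile_cdf_map hX,
    rvQuantile_eq_quantile_cdf_map hY]
  constructor
  · intro h p hp
    rcases hp.1.eq_or_lt with rfl | hp₀
    · simp
    set t := (cdf (P.map Y)).quantile p
    linarith [StieltjesFunction.integral_quantile_eq_mul_sub_integral_Iic hY₀ hY₁ ⟨hp₀, hp.2⟩,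
      StieltjesFunction.mul_sub_integral_quantile_le_integral_Iic hX₀ hX₁ hp t, h t]
  · intro h t
    have hFt : cdf (P.map X) t ∈ Icc (0 : ℝ) 1 := ⟨cdf_nonneg _ t, cdf_le_one _ t⟩
    linarith [StieltjesFunction.integral_Iic_eq_mul_sub_integral_quantile hX₀ hX₁ t, h _ hFt,
      StieltjesFunction.mul_sub_integral_quantile_le_integral_Iic hY₀ hY₁ hFt t]
end

section
/- Let F be a strongly regular CDF on [0,1]: F has a continuously differentiable density f with f > 0 on [0,1], f nondecreasing, and f log-concave (θ ↦ f′(θ)/f(θ) nonincreasing). Define the virtual value ψ(θ) = θ − (1 − F(θ))/f(θ) and W(θ) = (1 − F(θ))·ψ′(θ) − f(θ)·ψ(θ). Then W is nonincreasing on [0,1]. -/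
/-- For a strongly regular CDF `F` on `[0,1]` (continuously differentiable
density `f > 0`, `f` nondecreasing and log-concave), the monopolist's marginal response
`W(θ) = (1 - F θ) * ψ′(θ) - f θ * ψ(θ)` is nonincreasing on `[0,1]`, where
`ψ(θ) = θ - (1 - F θ)/f θ` is the virtual value. -/
theorem W_antitone_of_stronglyRegular
    (F f f' : ℝ → ℝ)
    (hF0 : F 0 = 0) (hF1 : F 1 = 1)
    (hFd : ∀ θ ∈ Set.Icc (0:ℝ) 1, HasDerivAt F (f θ) θ)
    (hfd : ∀ θ ∈ Set.Icc (0:ℝ) 1, HasDerivAt f (f' θ) θ)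
    (hf'cont : ContinuousOn f' (Set.Icc 0 1))
    (hfpos : ∀ θ ∈ Set.Icc (0:ℝ) 1, 0 < f θ)
    (hfmono : MonotoneOn f (Set.Icc 0 1))
    (hlogconc : AntitoneOn (fun θ => f' θ / f θ) (Set.Icc 0 1))
    (ψ : ℝ → ℝ) (hψ : ∀ θ, ψ θ = θ - (1 - F θ) / f θ)
    (W : ℝ → ℝ) (hW : ∀ θ, W θ = (1 - F θ) * deriv ψ θ - f θ * ψ θ) :
    AntitoneOn W (Set.Icc 0 1) := by
  have hψfun : ψ = fun t => t - (1 - F t) / f t := funext hψ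
  -- F is monotone on [0,1]
  have hFc : ContinuousOn F (Set.Icc 0 1) :=
    fun θ hθ => (hFd θ hθ).continuousAt.continuousWithinAt
  have hFmono : MonotoneOn F (Set.Icc 0 1) := by
    apply monotoneOn_of_deriv_nonneg (convex_Icc 0 1) hFc
    · intro x hx
      rw [interior_Icc] at hx
      exact ((hFd x (Set.mem_Icc_of_Ioo hx)).differentiableAt).differentiableWithinAt
    · intro x hx
      rw [interior_Icc] at hx
      rw [(hFd x (Set.mem_Icc_of_Ioo hx)).deriv]
      exact (hfpos x (Set.mem_Icc_of_Ioo hx)).le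
  have hFle1 : ∀ θ ∈ Set.Icc (0:ℝ) 1, F θ ≤ 1 := by
    intro θ hθ
    have := hFmono hθ (Set.right_mem_Icc.mpr zero_le_one) hθ.2
    rwa [hF1] at this
  -- f' is nonnegative on [0,1] (from monotonicity of f, via slopes)
  have hf'nonneg : ∀ x ∈ Set.Icc (0:ℝ) 1, 0 ≤ f' x := by
    intro x hx
    have hdw : HasDerivWithinAt f (f' x) (Set.Icc 0 1) x :=
      (hfd x hx).hasDerivWithinAt
    rw [hasDerivWithinAt_iff_tendsto_slope] at hdw
    have hxc : x ∈ closure (Set.Icc (0:ℝ) 1 \ {x}) := by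
      rcases lt_or_eq_of_le hx.2 with h1 | h1
      · have hsub : Set.Ioo x 1 ⊆ Set.Icc (0:ℝ) 1 \ {x} := by
          intro y hy
          exact ⟨⟨le_trans hx.1 hy.1.le, hy.2.le⟩, ne_of_gt hy.1⟩
        have : x ∈ closure (Set.Ioo x 1) := by
          rw [closure_Ioo (ne_of_lt h1)]
          exact Set.left_mem_Icc.mpr h1.le
        exact closure_mono hsub this
      · have hsub : Set.Ioo (0:ℝ) 1 ⊆ Set.Icc (0:ℝ) 1 \ {x} := by
          intro y hy
          refine ⟨⟨hy.1.le, hy.2.le⟩, ?_⟩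
          simp only [Set.mem_singleton_iff]
          rw [h1]
          exact ne_of_lt hy.2
        have : x ∈ closure (Set.Ioo (0:ℝ) 1) := by
          rw [closure_Ioo (by norm_num : (0:ℝ) ≠ 1)]
          exact hx
        exact closure_mono hsub this
    have hne : (nhdsWithin x (Set.Icc (0:ℝ) 1 \ {x})).NeBot :=
      mem_closure_iff_nhdsWithin_neBot.mp hxc
    refine ge_of_tendsto hdw ?_
    filter_upwards [self_mem_nhdsWithin] with y hy
    rcases hy with ⟨hyI, hyx⟩
    have hyx' : y ≠ x := hyx
    rw [slope_def_field]
    rcases lt_or_gt_of_ne hyx' with h | h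
    · apply div_nonneg_of_nonpos
      · exact sub_nonpos.mpr (hfmono hyI hx h.le)
      · exact sub_nonpos.mpr h.le
    · apply div_nonneg
      · exact sub_nonneg.mpr (hfmono hx hyI h.le)
      · exact sub_nonneg.mpr h.le
  -- closed-form expression for W on [0,1]
  have Wform : ∀ θ ∈ Set.Icc (0:ℝ) 1,
      W θ = 3 * (1 - F θ) + (1 - F θ)^2 * (f' θ / f θ) * (1 / f θ) - θ * f θ := by
    intro θ hθ
    have hfne : f θ ≠ 0 := ne_of_gt (hfpos θ hθ)
    have hψd : HasDerivAt ψ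
        (1 - ((0 - f θ) * f θ - (1 - F θ) * f' θ) / f θ ^ 2) θ := by
      rw [hψfun]
      exact (hasDerivAt_id θ).sub
        (((hasDerivAt_const θ (1:ℝ)).sub (hFd θ hθ)).div (hfd θ hθ) hfne)
    rw [hW, hψd.deriv, hψ]
    field_simp
    ring
  -- main monotonicity argument
  intro a ha b hb hab
  rw [Wform a ha, Wform b hb]
  have hFab : F a ≤ F b := hFmono ha hb hab
  have hfa : 0 < f a := hfpos a ha
  have hfb : 0 < f b := hfpos b hb
  have hfab : f a ≤ f b := hfmono ha hb hab
  have h2 : a * f a ≤ b * f b :=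
    mul_le_mul hab hfab hfa.le (le_trans ha.1 hab)
  have e1 : (1 - F b)^2 ≤ (1 - F a)^2 := by
    have h1b : 0 ≤ 1 - F b := sub_nonneg.mpr (hFle1 b hb)
    have : 1 - F b ≤ 1 - F a := by linarith
    exact pow_le_pow_left₀ h1b this 2
  have e2 : f' b / f b ≤ f' a / f a := hlogconc ha hb hab
  have e3 : 1 / f b ≤ 1 / f a := one_div_le_one_div_of_le hfa hfab
  have hna : 0 ≤ f' a / f a := div_nonneg (hf'nonneg a ha) hfa.le
  have hnb : 0 ≤ f' b / f b := div_nonneg (hf'nonneg b hb) hfb.le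
  have h3 : (1 - F b)^2 * (f' b / f b) * (1 / f b) ≤
      (1 - F a)^2 * (f' a / f a) * (1 / f a) := by
    have hsq : (0:ℝ) ≤ (1 - F a)^2 := sq_nonneg _
    have step1 : (1 - F b)^2 * (f' b / f b) ≤ (1 - F a)^2 * (f' a / f a) :=
      mul_le_mul e1 e2 hnb hsq
    have hprodb : 0 ≤ (1 - F b)^2 * (f' b / f b) := mul_nonneg (sq_nonneg _) hnb
    exact mul_le_mul step1 e3 (by positivity) (mul_nonneg hsq hna)
  linarith
end

section
/- Let F be a strongly regular CDF on [0,1]: F has a continuously differentiable density f with f > 0 on [0,1], f nondecreasing, and f log-concave (θ ↦ f′(θ)/f(θ) nonincreasing). Define ψ(θ) = θ − (1 − F(θ))/f(θ) and W(θ) = (1 − F(θ))·ψ′(θ) − f(θ)·ψ(θ). Then the function θ ↦ W(θ)/(1 − F(θ)) is nonincreasing on [0,1). -/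
open Set Filter Topology

/-- For a strongly regular CDF `F` on `[0,1]`, the function
`θ ↦ W(θ) / (1 - F θ)` is nonincreasing on `[0,1)`, where `ψ(θ) = θ - (1 - F θ)/f θ`
and `W(θ) = (1 - F θ) * ψ′(θ) - f θ * ψ(θ)`. -/
theorem W_div_survival_antitone_of_stronglyRegular
    (F f f' : ℝ → ℝ)
    (hF0 : F 0 = 0) (hF1 : F 1 = 1)
    (hFd : ∀ θ ∈ Set.Icc (0:ℝ) 1, HasDerivAt F (f θ) θ)
    (hfd : ∀ θ ∈ Set.Icc (0:ℝ) 1, HasDerivAt f (f' θ) θ)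
    (hf'cont : ContinuousOn f' (Set.Icc 0 1))
    (hfpos : ∀ θ ∈ Set.Icc (0:ℝ) 1, 0 < f θ)
    (hfmono : MonotoneOn f (Set.Icc 0 1))
    (hlogconc : AntitoneOn (fun θ => f' θ / f θ) (Set.Icc 0 1))
    (ψ : ℝ → ℝ) (hψ : ∀ θ, ψ θ = θ - (1 - F θ) / f θ)
    (W : ℝ → ℝ) (hW : ∀ θ, W θ = (1 - F θ) * deriv ψ θ - f θ * ψ θ) :
    AntitoneOn (fun θ => W θ / (1 - F θ)) (Set.Ico 0 1) := by
  have hFcont : ContinuousOn F (Icc 0 1) := fun θ hθ =>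
    (hFd θ hθ).continuousAt.continuousWithinAt
  have hFsm : StrictMonoOn F (Icc 0 1) := by
    apply strictMonoOn_of_deriv_pos (convex_Icc 0 1) hFcont
    intro x hx
    rw [interior_Icc] at hx
    rw [(hFd x (Ioo_subset_Icc_self hx)).deriv]
    exact hfpos x (Ioo_subset_Icc_self hx)
  have hFlt1 : ∀ θ ∈ Ico (0:ℝ) 1, F θ < 1 := by
    intro θ hθ
    have := hFsm ⟨hθ.1, hθ.2.le⟩ (right_mem_Icc.mpr zero_le_one) hθ.2
    rwa [hF1] at this
  have hf'nonneg : ∀ θ ∈ Ico (0:ℝ) 1, 0 ≤ f' θ := by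
    intro θ hθ
    have hd := hfd θ ⟨hθ.1, hθ.2.le⟩
    have ht : Tendsto (slope f θ) (𝓝[>] θ) (𝓝 (f' θ)) :=
      (hasDerivAt_iff_tendsto_slope.mp hd).mono_left
        (nhdsWithin_mono θ (fun y hy => ne_of_gt hy))
    refine ge_of_tendsto ht ?_
    filter_upwards [Ioo_mem_nhdsGT_of_mem ⟨le_refl θ, hθ.2⟩] with y hy
    have hfle : f θ ≤ f y :=
      hfmono ⟨hθ.1, hθ.2.le⟩ ⟨hθ.1.trans hy.1.le, hy.2.le⟩ hy.1.le
    rw [slope_def_field]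
    exact div_nonneg (sub_nonneg.mpr hfle) (sub_pos.mpr hy.1).le
  have hψfun : ψ = fun θ => θ - (1 - F θ) / f θ := funext hψ
  have hderivψ : ∀ θ ∈ Icc (0:ℝ) 1, deriv ψ θ = 2 + (1 - F θ) * f' θ / (f θ)^2 := by
    intro θ hθ
    have hf0 : f θ ≠ 0 := (hfpos θ hθ).ne'
    have h1 : HasDerivAt (fun t => 1 - F t) (-(f θ)) θ := by
      simpa using (hFd θ hθ).const_sub 1
    have h2 : HasDerivAt (fun t => (1 - F t) / f t)
        ((-(f θ) * f θ - (1 - F θ) * f' θ) / (f θ)^2) θ := h1.div (hfd θ hθ) hf0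
    have h3 : HasDerivAt ψ (1 - (-(f θ) * f θ - (1 - F θ) * f' θ) / (f θ)^2) θ := by
      rw [hψfun]; exact (hasDerivAt_id θ).sub h2
    rw [h3.deriv]; field_simp; ring
  have key : ∀ θ ∈ Ico (0:ℝ) 1,
      W θ / (1 - F θ) = 3 + (1 - F θ) * (f' θ / f θ) / f θ - f θ * θ / (1 - F θ) := by
    intro θ hθ
    have hθ' : θ ∈ Icc (0:ℝ) 1 := ⟨hθ.1, hθ.2.le⟩
    have hf0 : f θ ≠ 0 := (hfpos θ hθ').ne'
    have hF0' : (1 : ℝ) - F θ ≠ 0 := sub_ne_zero.mpr (hFlt1 θ hθ).ne'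
    rw [hW, hψ, hderivψ θ hθ']
    field_simp
    ring
  intro x hx y hy hxy
  have hx' : x ∈ Icc (0:ℝ) 1 := ⟨hx.1, hx.2.le⟩
  have hy' : y ∈ Icc (0:ℝ) 1 := ⟨hy.1, hy.2.le⟩
  have hfx : 0 < f x := hfpos x hx'
  have hfy : 0 < f y := hfpos y hy'
  have hFx : 0 < 1 - F x := sub_pos.mpr (hFlt1 x hx)
  have hFy : 0 < 1 - F y := sub_pos.mpr (hFlt1 y hy)
  have hFxy : 1 - F y ≤ 1 - F x := by
    have := hFsm.monotoneOn hx' hy' hxy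
    linarith
  have hratio : f' y / f y ≤ f' x / f x := hlogconc hx' hy' hxy
  have hratioy : 0 ≤ f' y / f y := div_nonneg (hf'nonneg y hy) hfy.le
  have hA : (1 - F y) * (f' y / f y) / f y ≤ (1 - F x) * (f' x / f x) / f x := by
    have hfxy : f x ≤ f y := hfmono hx' hy' hxy
    have hratiox : 0 ≤ f' x / f x := hratioy.trans hratio
    exact div_le_div₀ (mul_nonneg hFx.le hratiox)
      (mul_le_mul hFxy hratio hratioy hFx.le) hfx hfxy
  have hB : f x * x / (1 - F x) ≤ f y * y / (1 - F y) := by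
    have hfxy : f x ≤ f y := hfmono hx' hy' hxy
    exact div_le_div₀ (mul_nonneg hfy.le (hx.1.trans hxy))
      (mul_le_mul hfxy hxy hx.1 hfy.le) hFy hFxy
  simp only
  rw [key x hx, key y hy]
  linarith
end

section
/- Let F be a strongly regular CDF on [0,1]: F has a continuously differentiable density f with f > 0 on [0,1], f nondecreasing, and f log-concave (θ ↦ f′(θ)/f(θ) nonincreasing). Then the inverse hazard rate H(θ) = (1 − F(θ))/f(θ) is convex on [0,1]; equivalently, the virtual value ψ(θ) = θ − (1 − F(θ))/f(θ) is concave on [0,1]. -/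
/-- For a strongly regular CDF `F` on `[0,1]`, the inverse hazard rate
`H(θ) = (1 - F θ)/f θ` is convex on `[0,1]`; equivalently, the virtual value
`ψ(θ) = θ - (1 - F θ)/f θ` is concave on `[0,1]`. -/
theorem inverse_hazard_convex_of_stronglyRegular
    (F f f' : ℝ → ℝ)
    (hF0 : F 0 = 0) (hF1 : F 1 = 1)
    (hFd : ∀ θ ∈ Set.Icc (0:ℝ) 1, HasDerivAt F (f θ) θ)
    (hfd : ∀ θ ∈ Set.Icc (0:ℝ) 1, HasDerivAt f (f' θ) θ)
    (hf'cont : ContinuousOn f' (Set.Icc 0 1))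
    (hfpos : ∀ θ ∈ Set.Icc (0:ℝ) 1, 0 < f θ)
    (hfmono : MonotoneOn f (Set.Icc 0 1))
    (hlogconc : AntitoneOn (fun θ => f' θ / f θ) (Set.Icc 0 1))
    (H : ℝ → ℝ) (hH : ∀ θ, H θ = (1 - F θ) / f θ)
    (ψ : ℝ → ℝ) (hψ : ∀ θ, ψ θ = θ - (1 - F θ) / f θ) :
    ConvexOn ℝ (Set.Icc 0 1) H ∧ ConcaveOn ℝ (Set.Icc 0 1) ψ := by
  have hsub : Set.Ioo (0:ℝ) 1 ⊆ Set.Icc 0 1 := Set.Ioo_subset_Icc_self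
  -- F is monotone on Icc
  have hFcont : ContinuousOn F (Set.Icc 0 1) := fun θ hθ =>
    (hFd θ hθ).continuousAt.continuousWithinAt
  have hFmono : MonotoneOn F (Set.Icc 0 1) := by
    apply monotoneOn_of_deriv_nonneg (convex_Icc 0 1) hFcont
    · intro θ hθ
      rw [interior_Icc] at hθ
      exact (hFd θ (hsub hθ)).differentiableAt.differentiableWithinAt
    · intro θ hθ
      rw [interior_Icc] at hθ
      rw [(hFd θ (hsub hθ)).deriv]
      exact (hfpos θ (hsub hθ)).le
  have hFle1 : ∀ θ ∈ Set.Icc (0:ℝ) 1, F θ ≤ 1 := fun θ hθ => by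
    rw [← hF1]; exact hFmono hθ (Set.right_mem_Icc.2 one_pos.le) hθ.2
  -- H is nonnegative and antitone
  have hHnonneg : ∀ θ ∈ Set.Icc (0:ℝ) 1, 0 ≤ (1 - F θ) / f θ := fun θ hθ =>
    div_nonneg (by linarith [hFle1 θ hθ]) (hfpos θ hθ).le
  have hHanti : ∀ x ∈ Set.Icc (0:ℝ) 1, ∀ y ∈ Set.Icc (0:ℝ) 1, x ≤ y →
      (1 - F y) / f y ≤ (1 - F x) / f x := by
    intro x hx y hy hxy
    apply div_le_div₀ (by linarith [hFle1 x hx]) (by linarith [hFmono hx hy hxy])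
      (hfpos x hx) (hfmono hx hy hxy)
  -- f' is nonnegative on Ioo
  have hf'nonneg : ∀ θ ∈ Set.Ioo (0:ℝ) 1, 0 ≤ f' θ := by
    intro θ hθ
    have htend : Filter.Tendsto (slope f θ) (nhdsWithin θ {θ}ᶜ) (nhds (f' θ)) :=
      hasDerivAt_iff_tendsto_slope.1 (hfd θ (hsub hθ))
    refine ge_of_tendsto htend ?_
    filter_upwards [self_mem_nhdsWithin,
      nhdsWithin_le_nhds (isOpen_Ioo.mem_nhds hθ)] with x hx hx'
    rcases lt_or_gt_of_ne (Ne.symm hx) with h | h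
    · rw [slope_def_field]
      exact div_nonneg (sub_nonneg.2 (hfmono (hsub hθ) (hsub hx') h.le))
        (by linarith)
    · rw [slope_comm, slope_def_field]
      exact div_nonneg (sub_nonneg.2 (hfmono (hsub hx') (hsub hθ) h.le))
        (by linarith)
  -- derivative of H
  have hHd : ∀ θ ∈ Set.Icc (0:ℝ) 1,
      HasDerivAt H (-1 - (f' θ / f θ) * ((1 - F θ) / f θ)) θ := by
    intro θ hθ
    have h1 : HasDerivAt (fun t => (1 - F t) / f t)
        (((0 - f θ) * f θ - (1 - F θ) * f' θ) / f θ ^ 2) θ :=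
      ((hasDerivAt_const θ (1:ℝ)).sub (hFd θ hθ)).div (hfd θ hθ) (hfpos θ hθ).ne'
    have hfne : f θ ≠ 0 := (hfpos θ hθ).ne'
    have : H = fun t => (1 - F t) / f t := funext hH
    rw [this]
    convert h1 using 1
    field_simp
    ring
  have hHcont : ContinuousOn H (Set.Icc 0 1) := fun θ hθ =>
    (hHd θ hθ).continuousAt.continuousWithinAt
  have hHdiff : DifferentiableOn ℝ H (interior (Set.Icc (0:ℝ) 1)) := by
    rw [interior_Icc]
    exact fun θ hθ => (hHd θ (hsub hθ)).differentiableAt.differentiableWithinAt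
  have hmono : MonotoneOn (deriv H) (interior (Set.Icc (0:ℝ) 1)) := by
    rw [interior_Icc]
    intro x hx y hy hxy
    rw [(hHd x (hsub hx)).deriv, (hHd y (hsub hy)).deriv]
    have h1 : f' y / f y * ((1 - F y) / f y) ≤ f' x / f x * ((1 - F y) / f y) :=
      mul_le_mul_of_nonneg_right (hlogconc (hsub hx) (hsub hy) hxy)
        (hHnonneg y (hsub hy))
    have h2 : f' x / f x * ((1 - F y) / f y) ≤ f' x / f x * ((1 - F x) / f x) :=
      mul_le_mul_of_nonneg_left (hHanti x (hsub hx) y (hsub hy) hxy)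
        (div_nonneg (hf'nonneg x hx) (hfpos x (hsub hx)).le)
    linarith
  have hconv : ConvexOn ℝ (Set.Icc 0 1) H :=
    hmono.convexOn_of_deriv (convex_Icc 0 1) hHcont hHdiff
  refine ⟨hconv, ?_⟩
  have hψeq : ψ = _root_.id - H := funext fun θ => by
    simp [hψ, hH, Pi.sub_apply, sub_eq_add_neg]
  rw [hψeq]
  exact (concaveOn_id (convex_Icc 0 1)).sub hconv
end

section
/- Let F be a strongly regular CDF on [0,1] (continuously differentiable density f > 0, f nondecreasing and log-concave), with ψ(θ) = θ − (1 − F(θ))/f(θ) and W(θ) = (1 − F(θ))ψ′(θ) − f(θ)ψ(θ). Suppose θ* ∈ (0,1) is a monopoly threshold, i.e. ψ(θ*) = 0 (equivalently θ*·f(θ*) = 1 − F(θ*)). Then: (i) W(θ*) ≥ 2(1 − F(θ*)) > 1 − F(θ*); and (ii) every k ∈ [0,1) with W(k) ≤ 1 − F(k) satisfies k > θ*. In particular, every admissible threshold on the fairness-efficiency frontier strictly exceeds the unregulated monopoly threshold (supra-pricing). -/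
/-!
Since `f` is nondecreasing, `f' ≥ 0`, so differentiating `ψ = θ - (1 - F)/f` gives
`ψ' = 2 + (1 - F) f'/f² ≥ 2`. Hence `W ≥ 2(1 - F) - fψ`. At `θ*` this is `2(1 - F θ*)`, and
`1 - F θ* > 0` because `F` is strictly increasing with `F 1 = 1`. For `k ≤ θ*` monotonicity of
`ψ` gives `ψ k ≤ 0`, so again `W k ≥ 2(1 - F k) > 1 - F k`.
-/

open Set

theorem HasDerivAt.nonneg_of_monotoneOn_Icc {g : ℝ → ℝ} {g' a b x : ℝ} (hab : a < b)
    (hg : MonotoneOn g (Icc a b)) (hx : x ∈ Icc a b) (hd : HasDerivAt g g' x) : 0 ≤ g' :=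
  hd.hasDerivWithinAt.derivWithin (uniqueDiffOn_Icc hab x hx) ▸ hg.derivWithin_nonneg

theorem strictMonoOn_Icc_of_hasDerivAt_pos {g g' : ℝ → ℝ} {a b : ℝ}
    (hd : ∀ x ∈ Icc a b, HasDerivAt g (g' x) x) (hpos : ∀ x ∈ Ioo a b, 0 < g' x) :
    StrictMonoOn g (Icc a b) := by
  refine strictMonoOn_of_deriv_pos (convex_Icc a b)
    (fun x hx => (hd x hx).continuousAt.continuousWithinAt) fun x hx => ?_
  rw [interior_Icc] at hx
  exact (hd x (Ioo_subset_Icc_self hx)).deriv ▸ hpos x hx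

noncomputable def virtualValue (F f : ℝ → ℝ) (θ : ℝ) : ℝ := θ - (1 - F θ) / f θ

theorem hasDerivAt_virtualValue {F f : ℝ → ℝ} {f' θ : ℝ} (hF : HasDerivAt F (f θ) θ)
    (hf : HasDerivAt f f' θ) (hfθ : f θ ≠ 0) :
    HasDerivAt (virtualValue F f) (2 + (1 - F θ) * f' / f θ ^ 2) θ := by
  refine ((hasDerivAt_id' θ).sub (((hasDerivAt_const θ 1).sub hF).div hf hfθ)).congr_deriv ?_
  simp only [Pi.sub_apply]
  field_simp
  ring

section CDF

variable {F f f' : ℝ → ℝ}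

theorem one_sub_pos_of_mem_Ico (hF1 : F 1 = 1)
    (hFd : ∀ θ ∈ Icc (0 : ℝ) 1, HasDerivAt F (f θ) θ) (hfpos : ∀ θ ∈ Icc (0 : ℝ) 1, 0 < f θ)
    {θ : ℝ} (hθ : θ ∈ Ico (0 : ℝ) 1) : 0 < 1 - F θ := by
  have hmono := strictMonoOn_Icc_of_hasDerivAt_pos hFd fun x hx => hfpos x (Ioo_subset_Icc_self hx)
  linarith [hmono (Ico_subset_Icc_self hθ) (right_mem_Icc.2 zero_le_one) hθ.2]

theorem two_le_deriv_virtualValue (hF1 : F 1 = 1)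
    (hFd : ∀ θ ∈ Icc (0 : ℝ) 1, HasDerivAt F (f θ) θ)
    (hfd : ∀ θ ∈ Icc (0 : ℝ) 1, HasDerivAt f (f' θ) θ)
    (hfpos : ∀ θ ∈ Icc (0 : ℝ) 1, 0 < f θ) (hfmono : MonotoneOn f (Icc 0 1))
    {θ : ℝ} (hθ : θ ∈ Icc (0 : ℝ) 1) :
    2 ≤ deriv (virtualValue F f) θ := by
  have hFθ : 0 ≤ 1 - F θ := by
    rcases eq_or_lt_of_le hθ.2 with rfl | hlt
    · simp [hF1]
    · exact (one_sub_pos_of_mem_Ico hF1 hFd hfpos ⟨hθ.1, hlt⟩).le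
  have hf'θ : 0 ≤ f' θ := (hfd θ hθ).nonneg_of_monotoneOn_Icc zero_lt_one hfmono hθ
  rw [(hasDerivAt_virtualValue (hFd θ hθ) (hfd θ hθ) (hfpos θ hθ).ne').deriv]
  have hfθ := hfpos θ hθ
  have : 0 ≤ (1 - F θ) * f' θ / f θ ^ 2 := by positivity
  linarith

theorem strictMonoOn_virtualValue (hF1 : F 1 = 1)
    (hFd : ∀ θ ∈ Icc (0 : ℝ) 1, HasDerivAt F (f θ) θ)
    (hfd : ∀ θ ∈ Icc (0 : ℝ) 1, HasDerivAt f (f' θ) θ)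
    (hfpos : ∀ θ ∈ Icc (0 : ℝ) 1, 0 < f θ) (hfmono : MonotoneOn f (Icc 0 1)) :
    StrictMonoOn (virtualValue F f) (Icc 0 1) :=
  strictMonoOn_Icc_of_hasDerivAt_pos
    (fun θ hθ =>
      (hasDerivAt_virtualValue (hFd θ hθ) (hfd θ hθ) (hfpos θ hθ).ne').differentiableAt.hasDerivAt)
    fun θ hθ => by
      linarith [two_le_deriv_virtualValue hF1 hFd hfd hfpos hfmono (Ioo_subset_Icc_self hθ)]

end CDF

theorem supra_pricing_of_stronglyRegular_general
    (F f f' : ℝ → ℝ)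
    (hF1 : F 1 = 1)
    (hFd : ∀ θ ∈ Set.Icc (0:ℝ) 1, HasDerivAt F (f θ) θ)
    (hfd : ∀ θ ∈ Set.Icc (0:ℝ) 1, HasDerivAt f (f' θ) θ)
    (hfpos : ∀ θ ∈ Set.Icc (0:ℝ) 1, 0 < f θ)
    (hfmono : MonotoneOn f (Set.Icc 0 1))
    (ψ : ℝ → ℝ) (hψ : ∀ θ, ψ θ = θ - (1 - F θ) / f θ)
    (W : ℝ → ℝ) (hW : ∀ θ, W θ = (1 - F θ) * deriv ψ θ - f θ * ψ θ)
    (θs : ℝ) (hθs : θs ∈ Set.Ioo (0:ℝ) 1) (hmonopoly : ψ θs = 0) :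
    (2 * (1 - F θs) ≤ W θs ∧ 1 - F θs < 2 * (1 - F θs)) ∧
    (∀ k ∈ Set.Ico (0:ℝ) 1, W k ≤ 1 - F k → θs < k) := by
  obtain rfl : ψ = virtualValue F f := funext hψ
  have hW_ge : ∀ θ ∈ Ico (0 : ℝ) 1, 2 * (1 - F θ) - f θ * virtualValue F f θ ≤ W θ := by
    intro θ hθ
    rw [hW θ]
    linarith [mul_le_mul_of_nonneg_left
      (two_le_deriv_virtualValue hF1 hFd hfd hfpos hfmono (Ico_subset_Icc_self hθ))
      (one_sub_pos_of_mem_Ico hF1 hFd hfpos hθ).le]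
  have hθs' : θs ∈ Ico (0 : ℝ) 1 := Ioo_subset_Ico_self hθs
  have hFθs := one_sub_pos_of_mem_Ico hF1 hFd hfpos hθs'
  have hWθs := hW_ge θs hθs'
  rw [hmonopoly, mul_zero, sub_zero] at hWθs
  refine ⟨⟨hWθs, by linarith⟩, fun k hk hWk => ?_⟩
  by_contra! hkθ
  have hψk : virtualValue F f k ≤ 0 := hmonopoly ▸
    (strictMonoOn_virtualValue hF1 hFd hfd hfpos hfmono).monotoneOn (Ico_subset_Icc_self hk)
      (Ico_subset_Icc_self hθs') hkθ
  linarith [hW_ge k hk, one_sub_pos_of_mem_Ico hF1 hFd hfpos hk,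
    mul_nonpos_of_nonneg_of_nonpos (hfpos k (Ico_subset_Icc_self hk)).le hψk]

/-- **Supra-pricing.** For a strongly regular CDF `F` on `[0,1]` with monopoly
threshold `θ*` (where `ψ(θ*) = 0`): (i) `W(θ*) ≥ 2(1 - F θ*) > 1 - F θ*`; and (ii) every
`k ∈ [0,1)` with `W(k) ≤ 1 - F k` satisfies `k > θ*`, so every admissible frontier threshold
strictly exceeds the unregulated monopoly threshold. -/
theorem supra_pricing_of_stronglyRegular
    (F f f' : ℝ → ℝ)
    (hF0 : F 0 = 0) (hF1 : F 1 = 1)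
    (hFd : ∀ θ ∈ Set.Icc (0:ℝ) 1, HasDerivAt F (f θ) θ)
    (hfd : ∀ θ ∈ Set.Icc (0:ℝ) 1, HasDerivAt f (f' θ) θ)
    (hf'cont : ContinuousOn f' (Set.Icc 0 1))
    (hfpos : ∀ θ ∈ Set.Icc (0:ℝ) 1, 0 < f θ)
    (hfmono : MonotoneOn f (Set.Icc 0 1))
    (hlogconc : AntitoneOn (fun θ => f' θ / f θ) (Set.Icc 0 1))
    (ψ : ℝ → ℝ) (hψ : ∀ θ, ψ θ = θ - (1 - F θ) / f θ)
    (W : ℝ → ℝ) (hW : ∀ θ, W θ = (1 - F θ) * deriv ψ θ - f θ * ψ θ)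
    (θs : ℝ) (hθs : θs ∈ Set.Ioo (0:ℝ) 1) (hmonopoly : ψ θs = 0) :
    (2 * (1 - F θs) ≤ W θs ∧ 1 - F θs < 2 * (1 - F θs)) ∧
    (∀ k ∈ Set.Ico (0:ℝ) 1, W k ≤ 1 - F k → θs < k) :=
  supra_pricing_of_stronglyRegular_general F f f' hF1 hFd hfd hfpos hfmono ψ hψ W hW θs hθs
    hmonopoly
end

section
/- Let F be a strongly regular CDF on [0,1] (continuously differentiable density f > 0, f nondecreasing and log-concave), with ψ(θ) = θ − (1 − F(θ))/f(θ) and W(θ) = (1 − F(θ))ψ′(θ) − f(θ)ψ(θ). Let k ∈ [0,1) satisfy 0 ≤ W(k) ≤ 1 − F(k), and let q_k = 1_{[k,1]} be the threshold allocation. Then q_k maximizes the surplus of the lowest type subject to delivering total surplus at least that of q_k: q_k attains the maximum of ∫₀¹ (−W(θ)) q(θ) dθ over all nondecreasing measurable q : [0,1] → [0,1] satisfying ∫₀¹ (1 − F(θ) − W(θ)) q(θ) dθ ≥ ∫_k¹ (1 − F(θ) − W(θ)) dθ. -/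
/-!
Write `h = q - 1_{[k,1]}`, so that `h ≥ 0` below `k` and `h ≤ 0` above `k`; the claim is
`∫ W h ≥ 0`, the hypothesis `∫ u h ≥ 0` with `u = 1 - F - W`. Strong regularity makes `W`
decreasing and `u` strictly increasing on `[0,1]`, as one reads off the closed form
`W = 3(1 - F) + (1 - F)² f'/f² - θ f`. Single crossing of `h` at `k` then gives
`∫ W h ≥ W(k) ∫ h` and `∫ u h ≤ u(k) ∫ h`, so `u(k) ≥ 0` forces `∫ h ≥ 0` and `W(k) ≥ 0`
concludes.
-/

open MeasureTheory Set

section SingleCrossing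

variable {μ : Measure ℝ} {s : Set ℝ} {g h : ℝ → ℝ} {k : ℝ}

theorem mul_setIntegral_le_setIntegral_mul_of_antitoneOn (hs : MeasurableSet s)
    (hg : AntitoneOn g s) (hk : k ∈ s) (h_nonneg : ∀ θ ∈ s, θ < k → 0 ≤ h θ)
    (h_nonpos : ∀ θ ∈ s, k ≤ θ → h θ ≤ 0) (hh : IntegrableOn h s μ)
    (hgh : IntegrableOn (fun θ => g θ * h θ) s μ) :
    g k * ∫ θ in s, h θ ∂μ ≤ ∫ θ in s, g θ * h θ ∂μ := by
  rw [← integral_const_mul]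
  refine setIntegral_mono_on (hh.const_mul _) hgh hs fun θ hθ => ?_
  rcases lt_or_ge θ k with hθk | hkθ
  · exact mul_le_mul_of_nonneg_right (hg hθ hk hθk.le) (h_nonneg θ hθ hθk)
  · exact mul_le_mul_of_nonpos_right (hg hk hθ hkθ) (h_nonpos θ hθ hkθ)

theorem setIntegral_mul_le_mul_setIntegral_of_monotoneOn (hs : MeasurableSet s)
    (hg : MonotoneOn g s) (hk : k ∈ s) (h_nonneg : ∀ θ ∈ s, θ < k → 0 ≤ h θ)
    (h_nonpos : ∀ θ ∈ s, k ≤ θ → h θ ≤ 0) (hh : IntegrableOn h s μ)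
    (hgh : IntegrableOn (fun θ => g θ * h θ) s μ) :
    ∫ θ in s, g θ * h θ ∂μ ≤ g k * ∫ θ in s, h θ ∂μ := by
  have := mul_setIntegral_le_setIntegral_mul_of_antitoneOn hs hg.neg hk h_nonneg h_nonpos hh
    (hgh.neg.congr_fun (fun θ _ => (neg_mul _ _).symm) hs)
  simp only [neg_mul, integral_neg] at this
  linarith

theorem setIntegral_nonneg_of_setIntegral_mul_nonneg [NullSingletonClass μ] (hs : MeasurableSet s)
    (hg : StrictMonoOn g s) (hk : k ∈ s) (hgk : 0 ≤ g k)
    (h_nonneg : ∀ θ ∈ s, θ < k → 0 ≤ h θ) (h_nonpos : ∀ θ ∈ s, k ≤ θ → h θ ≤ 0)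
    (hh : IntegrableOn h s μ) (hgh : IntegrableOn (fun θ => g θ * h θ) s μ)
    (hgh_nonneg : 0 ≤ ∫ θ in s, g θ * h θ ∂μ) :
    0 ≤ ∫ θ in s, h θ ∂μ := by
  rcases hgk.lt_or_eq with hgk | hgk
  · have := setIntegral_mul_le_mul_setIntegral_of_monotoneOn hs hg.monotoneOn hk h_nonneg
      h_nonpos hh hgh
    exact nonneg_of_mul_nonneg_right (hgh_nonneg.trans this) hgk
  -- if `g k = 0`, then `g * h ≤ 0` on `s`, so `g * h = 0` a.e.;
  -- as `g` vanishes only at `k`, `h = 0` a.e.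
  have hgh_nonpos : ∀ θ ∈ s, g θ * h θ ≤ 0 := by
    intro θ hθ
    rcases lt_trichotomy θ k with hθk | rfl | hkθ
    · exact mul_nonpos_of_nonpos_of_nonneg (hgk ▸ (hg hθ hk hθk).le) (h_nonneg θ hθ hθk)
    · rw [← hgk, zero_mul]
    · exact mul_nonpos_of_nonneg_of_nonpos (hgk ▸ (hg hk hθ hkθ).le) (h_nonpos θ hθ hkθ.le)
  have hzero : (fun θ => -(g θ * h θ)) =ᵐ[μ.restrict s] 0 := by
    refine (setIntegral_eq_zero_iff_of_nonneg_ae ?_ (f := fun θ => -(g θ * h θ)) hgh.neg).mp ?_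
    · exact (ae_restrict_iff' hs).mpr (ae_of_all _ fun θ hθ => neg_nonneg.mpr (hgh_nonpos θ hθ))
    · rw [integral_neg, neg_eq_zero]
      exact le_antisymm (setIntegral_nonpos hs hgh_nonpos) hgh_nonneg
  have hh_zero : h =ᵐ[μ.restrict s] 0 := by
    filter_upwards [hzero, ae_restrict_mem hs, ae_restrict_of_ae (μ.ae_ne k)] with θ hθ hθs hθk
    have hgθ : g θ ≠ 0 := hgk ▸ (hg.injOn.ne hθs hk hθk)
    simpa [hgθ] using hθ
  rw [integral_congr_ae hh_zero, Pi.zero_def, integral_zero]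

theorem setIntegral_mul_sub_indicator_one {t : Set ℝ} {φ q : ℝ → ℝ} (ht : MeasurableSet t)
    (hts : t ⊆ s) (hφ : IntegrableOn φ s μ) (hφq : IntegrableOn (fun θ => φ θ * q θ) s μ) :
    IntegrableOn (fun θ => φ θ * (q θ - t.indicator 1 θ)) s μ ∧
      ∫ θ in s, φ θ * (q θ - t.indicator 1 θ) ∂μ =
        ∫ θ in s, φ θ * q θ ∂μ - ∫ θ in t, φ θ ∂μ := by
  have hind : ∀ θ, φ θ * t.indicator 1 θ = t.indicator φ θ := fun θ => by
    simpa using (t.indicator_mul_right φ 1 (i := θ)).symm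
  simp only [mul_sub, hind]
  refine ⟨hφq.sub (hφ.indicator ht), ?_⟩
  rw [integral_sub hφq (hφ.indicator ht), setIntegral_indicator ht,
    inter_eq_self_of_subset_right hts]

end SingleCrossing

theorem setIntegral_Icc_le_setIntegral_mul_of_threshold {μ : Measure ℝ} [NullSingletonClass μ]
    [IsFiniteMeasureOnCompacts μ] {a b k : ℝ} {W u q : ℝ → ℝ} (hk : k ∈ Icc a b)
    (hW : AntitoneOn W (Icc a b)) (hWc : ContinuousOn W (Icc a b)) (hWk : 0 ≤ W k)
    (hu : StrictMonoOn u (Icc a b)) (huc : ContinuousOn u (Icc a b)) (huk : 0 ≤ u k)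
    (hq : IntegrableOn q (Icc a b) μ) (hq01 : ∀ θ ∈ Icc a b, q θ ∈ Icc 0 1)
    (hcon : ∫ θ in Icc k b, u θ ∂μ ≤ ∫ θ in Icc a b, u θ * q θ ∂μ) :
    ∫ θ in Icc k b, W θ ∂μ ≤ ∫ θ in Icc a b, W θ * q θ ∂μ := by
  set h : ℝ → ℝ := fun θ => q θ - (Icc k b).indicator 1 θ
  have hsub : Icc k b ⊆ Icc a b := Icc_subset_Icc_left hk.1
  have h_nonneg : ∀ θ ∈ Icc a b, θ < k → 0 ≤ h θ := fun θ hθ hθk => by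
    simpa [h, indicator_of_notMem (fun hθ' : θ ∈ Icc k b => hθk.not_ge hθ'.1)] using (hq01 θ hθ).1
  have h_nonpos : ∀ θ ∈ Icc a b, k ≤ θ → h θ ≤ 0 := fun θ hθ hkθ => by
    simpa [h, indicator_of_mem (show θ ∈ Icc k b from ⟨hkθ, hθ.2⟩)] using (hq01 θ hθ).2
  have hh : IntegrableOn h (Icc a b) μ :=
    hq.sub ((integrableOn_const measure_Icc_lt_top.ne).indicator measurableSet_Icc)
  obtain ⟨huh, hu_eq⟩ := setIntegral_mul_sub_indicator_one (q := q) measurableSet_Icc hsub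
    huc.integrableOn_Icc (hq.continuousOn_mul huc isCompact_Icc)
  obtain ⟨hWh, hW_eq⟩ := setIntegral_mul_sub_indicator_one (q := q) measurableSet_Icc hsub
    hWc.integrableOn_Icc (hq.continuousOn_mul hWc isCompact_Icc)
  have hh_nonneg : 0 ≤ ∫ θ in Icc a b, h θ ∂μ :=
    setIntegral_nonneg_of_setIntegral_mul_nonneg measurableSet_Icc hu hk huk h_nonneg h_nonpos
      hh huh (by rw [hu_eq]; linarith)
  have hW_le := mul_setIntegral_le_setIntegral_mul_of_antitoneOn measurableSet_Icc hW hk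
    h_nonneg h_nonpos hh hWh
  rw [hW_eq] at hW_le
  linarith [mul_nonneg hWk hh_nonneg]

noncomputable def rentWeight (F f f' : ℝ → ℝ) (θ : ℝ) : ℝ :=
  3 * (1 - F θ) + (1 - F θ) ^ 2 * f' θ / f θ ^ 2 - f θ * θ

theorem rentWeight_eq {F f f' : ℝ → ℝ} {θ : ℝ} (hF : HasDerivAt F (f θ) θ)
    (hf : HasDerivAt f (f' θ) θ) (hfθ : f θ ≠ 0) :
    (1 - F θ) * deriv (fun t => t - (1 - F t) / f t) θ - f θ * (θ - (1 - F θ) / f θ) =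
      rentWeight F f f' θ := by
  have hψ : HasDerivAt (fun t => t - (1 - F t) / f t)
      (1 - (-f θ * f θ - (1 - F θ) * f' θ) / f θ ^ 2) θ :=
    (hasDerivAt_id θ).sub ((hF.const_sub 1).div hf hfθ)
  rw [hψ.deriv, rentWeight]
  field_simp
  ring

section StronglyRegular

variable {F f f' : ℝ → ℝ} {s : Set ℝ}

theorem antitoneOn_sq_one_sub_mul_div_sq (hF : MonotoneOn F s) (hF1 : ∀ θ ∈ s, F θ ≤ 1)
    (hf : ∀ θ ∈ s, 0 < f θ) (hfm : MonotoneOn f s) (hf' : ∀ θ ∈ s, 0 ≤ f' θ)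
    (hlog : AntitoneOn (fun θ => f' θ / f θ) s) :
    AntitoneOn (fun θ => (1 - F θ) ^ 2 * f' θ / f θ ^ 2) s := by
  intro x hx y hy hxy
  have hsplit : ∀ θ, (1 - F θ) ^ 2 * f' θ / f θ ^ 2 = (1 - F θ) ^ 2 * (f' θ / f θ) * (f θ)⁻¹ :=
    fun θ => by ring
  simp only [hsplit]
  have hGy : 0 ≤ 1 - F y := sub_nonneg.mpr (hF1 y hy)
  have hG : (1 - F y) ^ 2 ≤ (1 - F x) ^ 2 := pow_le_pow_left₀ hGy (by linarith [hF hx hy hxy]) 2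
  have hlogx : 0 ≤ f' x / f x := div_nonneg (hf' x hx) (hf x hx).le
  have hinv : (f y)⁻¹ ≤ (f x)⁻¹ := inv_anti₀ (hf x hx) (hfm hx hy hxy)
  exact mul_le_mul (mul_le_mul hG (hlog hx hy hxy) (div_nonneg (hf' y hy) (hf y hy).le)
    (by positivity)) hinv (inv_nonneg.mpr (hf y hy).le) (mul_nonneg (by positivity) hlogx)

theorem antitoneOn_rentWeight (hs : ∀ θ ∈ s, 0 ≤ θ) (hF : MonotoneOn F s)
    (hF1 : ∀ θ ∈ s, F θ ≤ 1) (hf : ∀ θ ∈ s, 0 < f θ) (hfm : MonotoneOn f s)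
    (hf' : ∀ θ ∈ s, 0 ≤ f' θ) (hlog : AntitoneOn (fun θ => f' θ / f θ) s) :
    AntitoneOn (rentWeight F f f') s := by
  intro x hx y hy hxy
  have := antitoneOn_sq_one_sub_mul_div_sq hF hF1 hf hfm hf' hlog hx hy hxy
  have := mul_le_mul (hfm hx hy hxy) hxy (hs x hx) (hf y hy).le
  have := hF hx hy hxy
  simp only [rentWeight] at *
  linarith

theorem strictMonoOn_one_sub_sub_rentWeight (hs : ∀ θ ∈ s, 0 ≤ θ) (hF : StrictMonoOn F s)
    (hF1 : ∀ θ ∈ s, F θ ≤ 1) (hf : ∀ θ ∈ s, 0 < f θ) (hfm : MonotoneOn f s)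
    (hf' : ∀ θ ∈ s, 0 ≤ f' θ) (hlog : AntitoneOn (fun θ => f' θ / f θ) s) :
    StrictMonoOn (fun θ => 1 - F θ - rentWeight F f f' θ) s := by
  intro x hx y hy hxy
  have := antitoneOn_sq_one_sub_mul_div_sq hF.monotoneOn hF1 hf hfm hf' hlog hx hy hxy.le
  have := mul_le_mul (hfm hx hy hxy.le) hxy.le (hs x hx) (hf y hy).le
  have := hF hx hy hxy
  simp only [rentWeight] at *
  linarith

theorem continuousOn_rentWeight (hF : ContinuousOn F s) (hf : ContinuousOn f s)
    (hf' : ContinuousOn f' s) (hf0 : ∀ θ ∈ s, f θ ≠ 0) :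
    ContinuousOn (rentWeight F f f') s := by
  unfold rentWeight
  fun_prop (disch := simp_all)

end StronglyRegular

theorem threshold_maximizes_lowest_type_surplus_general
    (F f f' : ℝ → ℝ)
    (hF1 : F 1 = 1)
    (hFd : ∀ θ ∈ Set.Icc (0:ℝ) 1, HasDerivAt F (f θ) θ)
    (hfd : ∀ θ ∈ Set.Icc (0:ℝ) 1, HasDerivAt f (f' θ) θ)
    (hf'cont : ContinuousOn f' (Set.Icc 0 1))
    (hfpos : ∀ θ ∈ Set.Icc (0:ℝ) 1, 0 < f θ)
    (hfmono : MonotoneOn f (Set.Icc 0 1))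
    (hlogconc : AntitoneOn (fun θ => f' θ / f θ) (Set.Icc 0 1))
    (ψ : ℝ → ℝ) (hψ : ∀ θ, ψ θ = θ - (1 - F θ) / f θ)
    (W : ℝ → ℝ) (hW : ∀ θ, W θ = (1 - F θ) * deriv ψ θ - f θ * ψ θ)
    (k : ℝ) (hk : k ∈ Set.Ico (0:ℝ) 1) (hWk0 : 0 ≤ W k) (hWk1 : W k ≤ 1 - F k) :
    ∀ q : ℝ → ℝ, MonotoneOn q (Set.Icc 0 1) → (∀ θ ∈ Set.Icc (0:ℝ) 1, q θ ∈ Set.Icc (0:ℝ) 1) →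
      (∫ θ in Set.Icc k 1, (1 - F θ - W θ)) ≤ (∫ θ in Set.Icc (0:ℝ) 1, (1 - F θ - W θ) * q θ) →
      (∫ θ in Set.Icc (0:ℝ) 1, (-W θ) * q θ) ≤ (∫ θ in Set.Icc k 1, (-W θ)) := by
  intro q hq_mono hq01 hcon
  have hI_nonneg : ∀ θ ∈ Icc (0:ℝ) 1, 0 ≤ θ := fun θ hθ => hθ.1
  have hk_mem : k ∈ Icc (0:ℝ) 1 := Ico_subset_Icc_self hk
  have hFc : ContinuousOn F (Icc 0 1) := fun θ hθ => (hFd θ hθ).continuousAt.continuousWithinAt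
  have hfc : ContinuousOn f (Icc 0 1) := fun θ hθ => (hfd θ hθ).continuousAt.continuousWithinAt
  have hF_strict : StrictMonoOn F (Icc 0 1) :=
    strictMonoOn_of_hasDerivWithinAt_pos (convex_Icc 0 1) hFc
      (fun θ hθ => (hFd θ (interior_subset hθ)).hasDerivWithinAt)
      (fun θ hθ => hfpos θ (interior_subset hθ))
  have hF_le_one : ∀ θ ∈ Icc (0:ℝ) 1, F θ ≤ 1 := fun θ hθ =>
    hF1 ▸ hF_strict.monotoneOn hθ (right_mem_Icc.mpr zero_le_one) hθ.2
  have hf' : ∀ θ ∈ Icc (0:ℝ) 1, 0 ≤ f' θ := fun θ hθ =>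
    ((hfd θ hθ).hasDerivWithinAt.derivWithin (uniqueDiffOn_Icc zero_lt_one θ hθ)) ▸
      hfmono.derivWithin_nonneg
  have hW_eq : EqOn (rentWeight F f f') W (Icc 0 1) := fun θ hθ => by
    rw [hW, show ψ = fun t => t - (1 - F t) / f t from funext hψ,
      rentWeight_eq (hFd θ hθ) (hfd θ hθ) (hfpos θ hθ).ne']
  have hWc : ContinuousOn W (Icc 0 1) :=
    (continuousOn_rentWeight hFc hfc hf'cont fun θ hθ => (hfpos θ hθ).ne').congr hW_eq.symm
  have hW_anti : AntitoneOn W (Icc 0 1) :=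
    (antitoneOn_rentWeight hI_nonneg hF_strict.monotoneOn hF_le_one hfpos hfmono hf'
      hlogconc).congr hW_eq
  have hu_strict : StrictMonoOn (fun θ => 1 - F θ - W θ) (Icc 0 1) :=
    (strictMonoOn_one_sub_sub_rentWeight hI_nonneg hF_strict hF_le_one hfpos hfmono hf'
      hlogconc).congr fun θ hθ => by simp only [hW_eq hθ]
  have key := setIntegral_Icc_le_setIntegral_mul_of_threshold (μ := volume) hk_mem hW_anti hWc
    hWk0 hu_strict ((continuousOn_const.sub hFc).sub hWc) (by linarith)
    (hq_mono.integrableOn_isCompact isCompact_Icc) hq01 hcon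
  simpa only [neg_mul, integral_neg, neg_le_neg_iff] using key

/-- For a strongly regular CDF `F` on `[0,1]` and a frontier threshold `k`
(with `0 ≤ W(k) ≤ 1 - F(k)`), the threshold allocation `q_k = 1_{[k,1]}` maximizes the
surplus of the lowest type `∫ (-W) q` over all nondecreasing allocations `q : [0,1] → [0,1]`
delivering total surplus `∫ (1 - F - W) q` at least that of `q_k`. -/
theorem threshold_maximizes_lowest_type_surplus
    (F f f' : ℝ → ℝ)
    (hF0 : F 0 = 0) (hF1 : F 1 = 1)
    (hFd : ∀ θ ∈ Set.Icc (0:ℝ) 1, HasDerivAt F (f θ) θ)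
    (hfd : ∀ θ ∈ Set.Icc (0:ℝ) 1, HasDerivAt f (f' θ) θ)
    (hf'cont : ContinuousOn f' (Set.Icc 0 1))
    (hfpos : ∀ θ ∈ Set.Icc (0:ℝ) 1, 0 < f θ)
    (hfmono : MonotoneOn f (Set.Icc 0 1))
    (hlogconc : AntitoneOn (fun θ => f' θ / f θ) (Set.Icc 0 1))
    (ψ : ℝ → ℝ) (hψ : ∀ θ, ψ θ = θ - (1 - F θ) / f θ)
    (W : ℝ → ℝ) (hW : ∀ θ, W θ = (1 - F θ) * deriv ψ θ - f θ * ψ θ)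
    (k : ℝ) (hk : k ∈ Set.Ico (0:ℝ) 1) (hWk0 : 0 ≤ W k) (hWk1 : W k ≤ 1 - F k) :
    ∀ q : ℝ → ℝ, MonotoneOn q (Set.Icc 0 1) → (∀ θ ∈ Set.Icc (0:ℝ) 1, q θ ∈ Set.Icc (0:ℝ) 1) →
      (∫ θ in Set.Icc k 1, (1 - F θ - W θ)) ≤ (∫ θ in Set.Icc (0:ℝ) 1, (1 - F θ - W θ) * q θ) →
      (∫ θ in Set.Icc (0:ℝ) 1, (-W θ) * q θ) ≤ (∫ θ in Set.Icc k 1, (-W θ)) :=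
  threshold_maximizes_lowest_type_surplus_general F f f' hF1 hFd hfd hf'cont hfpos hfmono hlogconc ψ
    hψ W hW k hk hWk0 hWk1
end
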